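/- arXiv:2410.22703 — 5 statements merged into one kernel-verified Lean document; each statement's English description precedes it below -/
import Mathlib

section
/- Let E_1, …, E_n be i.i.d. rate-1 exponential random variables and fix i ∈ {1,…,n}. Then for every ε > 0: if ε ≤ 2i·Σ_{j=i}^n j^{−2}, then P(|Σ_{j=i}^n (E_j − 1)/j| > ε) ≤ 2·exp(−ε² / (8·Σ_{j=i}^n j^{−2})); and if ε > 2i·Σ_{j=i}^n j^{−2}, then P(|Σ_{j=i}^n (E_j − 1)/j| > ε) ≤ 2·exp(−iε/4). -/
open MeasureTheory ProbabilityTheory Filter Real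

noncomputable section

/-- `F` is a continuous CDF supported on `(0, ∞)`. -/
def IsCDF (F : ℝ → ℝ) : Prop :=
  Monotone F ∧ Continuous F ∧ (∀ x ≤ (0:ℝ), F x = 0) ∧ Tendsto F atTop (nhds 1)

/-- Generalized inverse `F^←(y) = inf {x | F x ≥ y}`. -/
noncomputable def Finv (F : ℝ → ℝ) (y : ℝ) : ℝ := sInf {x | y ≤ F x}

/-- `U(t) = F^←(1 - 1/t)`. -/
noncomputable def Ufun (F : ℝ → ℝ) (t : ℝ) : ℝ := Finv F (1 - 1/t)

/-- Condition (RV): regular variation of `U` with index `γ = 1/α`. -/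
def CondRV (F : ℝ → ℝ) (α : ℝ) : Prop :=
  ∀ x : ℝ, 0 < x →
    Tendsto (fun t => Ufun F (t * x) / Ufun F t) atTop (nhds (x ^ (1/α)))

/-- Condition (UL) with parameters `t₀` and `η`. -/
def CondUL (F : ℝ → ℝ) (α t₀ η : ℝ) : Prop :=
  0 < t₀ ∧ 0 ≤ η ∧ η < 1 ∧
  ∀ t ≥ t₀, ∀ x ≥ (1:ℝ), (1 - η) * x ^ (1/α) + η ≤ Ufun F (t * x) / Ufun F t

variable {Ω : Type*} [mΩ : MeasurableSpace Ω]

/-- `W 1, W 2, …` are i.i.d. with distribution function `F`. -/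
def IIDWith (P : Measure Ω) (F : ℝ → ℝ) (W : ℕ → Ω → ℝ) : Prop :=
  (∀ i, Measurable (W i)) ∧
  iIndepFun W P ∧
  ∀ i (x : ℝ), P {ω | W i ω ≤ x} = ENNReal.ofReal (F x)

/-- `Wo n 1 ≥ Wo n 2 ≥ … ≥ Wo n n` are the decreasing order statistics of `W 1, …, W n`. -/
def IsOrderStats (W : ℕ → Ω → ℝ) (Wo : ℕ → ℕ → Ω → ℝ) : Prop :=
  (∀ n i, Measurable (Wo n i)) ∧
  (∀ n (ω : Ω), ∀ i ∈ Finset.Icc 1 n, ∀ j ∈ Finset.Icc 1 n, i ≤ j → Wo n j ω ≤ Wo n i ω) ∧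
  (∀ n (ω : Ω), (Finset.Icc 1 n).val.map (fun i => Wo n i ω)
      = (Finset.Icc 1 n).val.map (fun i => W i ω))

/-- The σ-algebra generated by the order statistics `(Wo n 1, …, Wo n n)`. -/
def weightSigma (Wo : ℕ → ℕ → Ω → ℝ) (n : ℕ) : MeasurableSpace Ω :=
  MeasurableSpace.comap (fun ω (i : Fin n) => Wo n ((i : ℕ) + 1) ω) inferInstance

/-- Norros–Reittu degree hypothesis: conditionally on the weights, `D n i` is Poisson
with mean `Wo n i`. -/
def NorrosReittu (P : Measure Ω) (Wo : ℕ → ℕ → Ω → ℝ) (D : ℕ → ℕ → Ω → ℕ) : Prop :=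
  (∀ n i, Measurable (D n i)) ∧
  ∀ n, ∀ i ∈ Finset.Icc 1 n, ∀ k : ℕ,
    (P[Set.indicator {ω | D n i ω = k} (fun _ => (1:ℝ)) | weightSigma Wo n]) =ᵐ[P]
      fun ω => Real.exp (-(Wo n i ω)) * (Wo n i ω)^k / (Nat.factorial k)

/-- Chung–Lu degree hypothesis. -/
def ChungLu (P : Measure Ω) [IsFiniteMeasure P] [StandardBorelSpace Ω]
    (W : ℕ → Ω → ℝ) (Wo : ℕ → ℕ → Ω → ℝ)
    (A : ℕ → ℕ → ℕ → Ω → ℕ) (D : ℕ → ℕ → Ω → ℕ) : Prop :=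
  (∀ n i j, Measurable (A n i j)) ∧
  (∀ n i j (ω : Ω), A n i j ω ≤ 1) ∧
  (∀ n i j (ω : Ω), A n j i ω = A n i j ω) ∧
  (∀ n i (ω : Ω), D n i ω = ∑ j ∈ Finset.Icc 1 n, A n i j ω) ∧
  (∀ n (hle : weightSigma Wo n ≤ mΩ),
    iCondIndepFun (weightSigma Wo n) hle
      (fun (p : {p : ℕ × ℕ // p.1 ∈ Finset.Icc 1 n ∧ p.2 ∈ Finset.Icc 1 n ∧ p.1 ≤ p.2})
        (ω : Ω) => A n p.1.1 p.1.2 ω) P) ∧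
  (∀ n, ∀ i ∈ Finset.Icc 1 n, ∀ j ∈ Finset.Icc 1 n, i ≤ j →
    (P[Set.indicator {ω | A n i j ω = 1} (fun _ => (1:ℝ)) | weightSigma Wo n]) =ᵐ[P]
      fun ω => min (Wo n i ω * Wo n j ω / (∑ l ∈ Finset.Icc 1 n, W l ω)) 1)

/-- Decreasing order statistics for natural-number-valued degree sequences. -/
def IsOrderStatsN (D : ℕ → ℕ → Ω → ℕ) (Do : ℕ → ℕ → Ω → ℕ) : Prop :=
  (∀ n (ω : Ω), ∀ i ∈ Finset.Icc 1 n, ∀ j ∈ Finset.Icc 1 n, i ≤ j → Do n j ω ≤ Do n i ω) ∧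
  (∀ n (ω : Ω), (Finset.Icc 1 n).val.map (fun i => Do n i ω)
      = (Finset.Icc 1 n).val.map (fun i => D n i ω))

/-!
Chernoff's method. For a rate-1 exponential `E` and `|u| ≤ 1/2`,
`𝔼[exp (u (E - 1))] = exp (-u) / (1 - u) ≤ exp (2 u²)`, so by independence the moment generating
function of `S = ∑_{j=i}^n (E_j - 1) / j` satisfies `𝔼[exp (λ S)] ≤ exp (2 λ² V)` for `|λ| ≤ i / 2`,
where `V = ∑_{j=i}^n j⁻²`. Markov's inequality applied to `exp (± λ S)` gives
`P(|S| > ε) ≤ 2 exp (-λ ε + 2 λ² V)`; choose `λ = ε / (4 V)` when this is at most `i / 2`, and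
`λ = i / 2` otherwise.
-/

open Set

lemma expMeasure_eq_withDensity (r : ℝ) :
    expMeasure r = volume.withDensity (exponentialPDF r) := rfl

lemma measurable_exponentialPDF (r : ℝ) : Measurable (exponentialPDF r) :=
  (measurable_exponentialPDFReal r).ennreal_ofReal

lemma toReal_exponentialPDF_mul_exp {r : ℝ} (hr : 0 < r) (u x : ℝ) :
    (exponentialPDF r x).toReal * exp (u * x)
      = r * (Ici 0).indicator (fun x => exp ((u - r) * x)) x := by
  rcases le_or_gt 0 x with hx | hx
  · rw [exponentialPDF_of_nonneg hx, ENNReal.toReal_ofReal (by positivity),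
      indicator_of_mem (mem_Ici.2 hx), mul_assoc, ← exp_add]
    ring_nf
  · simp [exponentialPDF_of_neg hx, indicator_of_notMem (notMem_Ici.2 hx)]

lemma integrable_exp_mul_expMeasure {r u : ℝ} (hr : 0 < r) (hu : u < r) :
    Integrable (fun x => exp (u * x)) (expMeasure r) := by
  rw [expMeasure_eq_withDensity, integrable_withDensity_iff_integrable_smul'
    (measurable_exponentialPDF r) (ae_of_all _ fun _ => ENNReal.ofReal_lt_top)]
  simp_rw [smul_eq_mul, toReal_exponentialPDF_mul_exp hr]
  refine Integrable.const_mul ?_ r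
  rw [integrable_indicator_iff measurableSet_Ici, integrableOn_Ici_iff_integrableOn_Ioi]
  exact integrableOn_exp_mul_Ioi (sub_neg.2 hu) 0

lemma mgf_id_expMeasure {r u : ℝ} (hr : 0 < r) (hu : u < r) :
    mgf id (expMeasure r) u = r / (r - u) := by
  rw [mgf, expMeasure_eq_withDensity, integral_withDensity_eq_integral_toReal_smul
    (measurable_exponentialPDF r) (ae_of_all _ fun _ => ENNReal.ofReal_lt_top)]
  simp_rw [smul_eq_mul, id, toReal_exponentialPDF_mul_exp hr]
  rw [integral_const_mul, integral_indicator measurableSet_Ici, integral_Ici_eq_integral_Ioi,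
    integral_exp_mul_Ioi (sub_neg.2 hu), mul_zero, exp_zero, neg_div, ← div_neg, neg_sub,
    mul_one_div]

lemma map_eq_expMeasure_of_measure_lt {P : Measure Ω} [IsProbabilityMeasure P] {X : Ω → ℝ}
    {r : ℝ} (hr : 0 < r) (hX : Measurable X)
    (htail : ∀ x, 0 ≤ x → P {ω | x < X ω} = ENNReal.ofReal (exp (-(r * x)))) :
    P.map X = expMeasure r := by
  have := isProbabilityMeasure_expMeasure hr
  have := Measure.isProbabilityMeasure_map (μ := P) hX.aemeasurable
  rw [← Measure.cdf_eq_iff]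
  ext x
  have hcompl : X ⁻¹' Iic x = {ω | x < X ω}ᶜ := by ext; simp
  rw [cdf_expMeasure_eq hr, cdf_eq_real, map_measureReal_apply hX measurableSet_Iic, hcompl,
    measureReal_compl (measurableSet_lt measurable_const hX), probReal_univ]
  split_ifs with hx
  · rw [measureReal_def, htail x hx, ENNReal.toReal_ofReal (exp_pos _).le]
  · have hpos : P.real {ω | 0 < X ω} = 1 := by
      rw [measureReal_def, htail 0 le_rfl, mul_zero, neg_zero, exp_zero, ENNReal.ofReal_one,
        ENNReal.toReal_one]
    have hmono : P.real {ω | 0 < X ω} ≤ P.real {ω | x < X ω} :=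
      measureReal_mono fun ω (h : 0 < X ω) => (not_le.1 hx).trans h
    linarith [measureReal_le_one (μ := P) (s := {ω | x < X ω})]

lemma exp_neg_mul_inv_one_sub_le {u : ℝ} (hu : |u| ≤ 1 / 2) :
    exp (-u) * (1 - u)⁻¹ ≤ exp (2 * u ^ 2) := by
  obtain ⟨hu₁, hu₂⟩ := abs_le.1 hu
  have h1u : 0 < 1 - u := by linarith
  calc exp (-u) * (1 - u)⁻¹ = exp (-u) * (u / (1 - u) + 1) := by field_simp; ring
    _ ≤ exp (-u) * exp (u / (1 - u)) := by gcongr; exact add_one_le_exp _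
    _ = exp (u ^ 2 / (1 - u)) := by rw [← exp_add]; congr 1; field_simp; ring
    _ ≤ exp (2 * u ^ 2) := by
      gcongr
      rw [div_le_iff₀ h1u]
      nlinarith [sq_nonneg u]

lemma integrable_exp_mul_of_map_eq_expMeasure {P : Measure Ω} {X : Ω → ℝ} {r u : ℝ}
    (hr : 0 < r) (hu : u < r) (hX : Measurable X) (hlaw : P.map X = expMeasure r) :
    Integrable (fun ω => exp (u * X ω)) P := by
  have h := integrable_exp_mul_expMeasure hr hu
  rw [← hlaw] at h
  exact (integrable_map_measure (by fun_prop) hX.aemeasurable).1 h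

lemma mgf_sub_one_le_of_map_eq_expMeasure {P : Measure Ω} {X : Ω → ℝ} {u : ℝ}
    (hu : |u| ≤ 1 / 2) (hX : Measurable X) (hlaw : P.map X = expMeasure 1) :
    Integrable (fun ω => exp (u * (X ω - 1))) P ∧
      mgf (fun ω => X ω - 1) P u ≤ exp (2 * u ^ 2) := by
  have hu1 : u < 1 := by linarith [le_abs_self u]
  have hint := integrable_exp_mul_of_map_eq_expMeasure one_pos hu1 hX hlaw
  have hmgf : mgf X P u = (1 - u)⁻¹ := by
    rw [← mgf_id_map hX.aemeasurable, hlaw, mgf_id_expMeasure one_pos hu1, one_div]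
  constructor
  · refine (hint.const_mul (exp (-u))).congr (ae_of_all _ fun ω => ?_)
    simp only [← exp_add]
    ring_nf
  · simp_rw [sub_eq_add_neg, mgf_add_const, hmgf, mul_neg_one, mul_comm _ (exp _)]
    exact exp_neg_mul_inv_one_sub_le hu

lemma mgf_sum_sub_one_div_le {P : Measure Ω} {ι : Type*} {X : ι → Ω → ℝ}
    (hmeas : ∀ j, Measurable (X j)) (hindep : iIndepFun X P)
    (hlaw : ∀ j, P.map (X j) = expMeasure 1) (s : Finset ι) (a : ι → ℝ) {t : ℝ}
    (ht : ∀ j ∈ s, 2 * |t| ≤ a j) :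
    Integrable (fun ω => exp (t * ∑ j ∈ s, (X j ω - 1) / a j)) P ∧
      mgf (fun ω => ∑ j ∈ s, (X j ω - 1) / a j) P t
        ≤ exp (2 * t ^ 2 * ∑ j ∈ s, 1 / a j ^ 2) := by
  have := hindep.isProbabilityMeasure
  set Y : ι → Ω → ℝ := fun j ω => (X j ω - 1) / a j
  have hY : ∀ j, Measurable (Y j) := fun j => ((hmeas j).sub_const 1).div_const _
  have hYindep : iIndepFun Y P :=
    hindep.comp (fun j x => (x - 1) / a j) fun j => (measurable_id.sub_const 1).div_const _
  have hterm : ∀ j ∈ s, Integrable (fun ω => exp (t * Y j ω)) P ∧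
      mgf (Y j) P t ≤ exp (2 * t ^ 2 * (1 / a j ^ 2)) := by
    intro j hj
    have hta : |t / a j| ≤ 1 / 2 := by
      rw [abs_div]
      exact div_le_of_le_mul₀ (abs_nonneg _) (by norm_num) (by grind)
    obtain ⟨hint, hmgf⟩ := mgf_sub_one_le_of_map_eq_expMeasure hta (hmeas j) (hlaw j)
    have hYj : Y j = fun ω => (a j)⁻¹ * (X j ω - 1) := by ext; simp [Y, div_eq_inv_mul]
    refine ⟨hint.congr (ae_of_all _ fun ω => by simp only [Y]; ring_nf), ?_⟩
    rw [hYj, mgf_const_mul, inv_mul_eq_div]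
    convert hmgf using 2
    ring
  have hsum : (fun ω => ∑ j ∈ s, (X j ω - 1) / a j) = ∑ j ∈ s, Y j := by
    ext ω; simp [Y]
  refine ⟨by simpa only [Finset.sum_apply] using
    hYindep.integrable_exp_mul_sum hY fun j hj => (hterm j hj).1, ?_⟩
  rw [hsum]
  calc mgf (∑ j ∈ s, Y j) P t = ∏ j ∈ s, mgf (Y j) P t := hYindep.mgf_sum hY s
    _ ≤ ∏ j ∈ s, exp (2 * t ^ 2 * (1 / a j ^ 2)) :=
      Finset.prod_le_prod (fun _ _ => mgf_nonneg) fun j hj => (hterm j hj).2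
    _ = exp (2 * t ^ 2 * ∑ j ∈ s, 1 / a j ^ 2) := by rw [← exp_sum, Finset.mul_sum]

lemma measureReal_lt_abs_le_two_mul_exp {P : Measure Ω} [IsFiniteMeasure P] {Y : Ω → ℝ}
    {t c : ℝ} (ε : ℝ) (ht : 0 ≤ t)
    (hY : ∀ s, |s| ≤ t → Integrable (fun ω => exp (s * Y ω)) P ∧ mgf Y P s ≤ exp c) :
    P.real {ω | ε < |Y ω|} ≤ 2 * exp (-t * ε + c) := by
  obtain ⟨hint, hmgf⟩ := hY t (abs_of_nonneg ht).le
  obtain ⟨hint', hmgf'⟩ := hY (-t) (by rw [abs_neg, abs_of_nonneg ht])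
  have hupper := measure_ge_le_exp_mul_mgf ε ht hint
  have hlower := measure_le_le_exp_mul_mgf (-ε) (neg_nonpos.2 ht) hint'
  have hsplit : {ω | ε < |Y ω|} ⊆ {ω | ε ≤ Y ω} ∪ {ω | Y ω ≤ -ε} :=
    fun ω (hω : ε < |Y ω|) => by
      rcases lt_abs.1 hω with h | h
      exacts [Or.inl h.le, Or.inr (show Y ω ≤ -ε by linarith)]
  calc P.real {ω | ε < |Y ω|} ≤ P.real {ω | ε ≤ Y ω} + P.real {ω | Y ω ≤ -ε} :=
        (measureReal_mono hsplit).trans (measureReal_union_le _ _)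
    _ ≤ exp (-t * ε) * exp c + exp (-t * ε) * exp c := by
        rw [neg_mul_neg] at hlower
        gcongr
        exacts [hupper.trans (by gcongr), hlower.trans (by gcongr)]
    _ = 2 * exp (-t * ε + c) := by rw [exp_add]; ring

lemma measure_lt_abs_sum_sub_one_div_le {P : Measure Ω} [IsProbabilityMeasure P]
    {X : ℕ → Ω → ℝ} (hmeas : ∀ j, Measurable (X j)) (hindep : iIndepFun X P)
    (hlaw : ∀ j, P.map (X j) = expMeasure 1) (n i : ℕ) (ε t : ℝ) (ht : 0 ≤ t)
    (hti : 2 * t ≤ i) :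
    P {ω | ε < |∑ j ∈ Finset.Icc i n, (X j ω - 1) / (j : ℝ)|}
      ≤ ENNReal.ofReal
          (2 * exp (-t * ε + 2 * t ^ 2 * ∑ j ∈ Finset.Icc i n, 1 / (j : ℝ) ^ 2)) := by
  rw [ENNReal.le_ofReal_iff_toReal_le (measure_ne_top _ _) (by positivity)]
  refine measureReal_lt_abs_le_two_mul_exp ε ht fun s hs => ?_
  obtain ⟨hint, hmgf⟩ := mgf_sum_sub_one_div_le hmeas hindep hlaw (Finset.Icc i n)
    (fun j => (j : ℝ)) (t := s) fun j hj => by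
      have : (i : ℝ) ≤ j := by exact_mod_cast (Finset.mem_Icc.1 hj).1
      linarith
  refine ⟨hint, hmgf.trans (exp_le_exp.2 ?_)⟩
  have hst : s ^ 2 ≤ t ^ 2 := by rw [← sq_abs]; exact pow_le_pow_left₀ (abs_nonneg s) hs 2
  have hV : 0 ≤ ∑ j ∈ Finset.Icc i n, 1 / (j : ℝ) ^ 2 :=
    Finset.sum_nonneg fun j _ => div_nonneg zero_le_one (sq_nonneg _)
  gcongr

theorem stmt2 (P : Measure Ω) [IsProbabilityMeasure P] (E : ℕ → Ω → ℝ)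
    (hmeas : ∀ j, Measurable (E j))
    (hindep : iIndepFun E P)
    (hdist : ∀ j, ∀ x : ℝ, 0 ≤ x → P {ω | x < E j ω} = ENNReal.ofReal (Real.exp (-x)))
    (n i : ℕ) (hi : i ∈ Finset.Icc 1 n) (ε : ℝ) (hε : 0 < ε) :
    (ε ≤ 2 * i * ∑ j ∈ Finset.Icc i n, (1 : ℝ) / (j : ℝ) ^ 2 →
      P {ω | ε < |∑ j ∈ Finset.Icc i n, (E j ω - 1) / (j : ℝ)|}
        ≤ ENNReal.ofReal (2 * Real.exp
            (-(ε ^ 2) / (8 * ∑ j ∈ Finset.Icc i n, (1 : ℝ) / (j : ℝ) ^ 2)))) ∧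
    (2 * i * ∑ j ∈ Finset.Icc i n, (1 : ℝ) / (j : ℝ) ^ 2 < ε →
      P {ω | ε < |∑ j ∈ Finset.Icc i n, (E j ω - 1) / (j : ℝ)|}
        ≤ ENNReal.ofReal (2 * Real.exp (-((i : ℝ) * ε) / 4))) := by
  obtain ⟨h1i, hin⟩ := Finset.mem_Icc.1 hi
  have hlaw : ∀ j, P.map (E j) = expMeasure 1 := fun j =>
    map_eq_expMeasure_of_measure_lt one_pos (hmeas j) fun x hx => by
      rw [one_mul]
      exact hdist j x hx
  have chernoff := measure_lt_abs_sum_sub_one_div_le hmeas hindep hlaw n i ε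
  set V := ∑ j ∈ Finset.Icc i n, (1 : ℝ) / (j : ℝ) ^ 2
  have hV : 0 < V := Finset.sum_pos (fun j hj => by
    have : (0 : ℝ) < j := by exact_mod_cast h1i.trans (Finset.mem_Icc.1 hj).1
    positivity) ⟨i, Finset.mem_Icc.2 ⟨le_rfl, hin⟩⟩
  constructor
  · intro hsmall
    have hti : 2 * (ε / (4 * V)) ≤ i := by
      rw [show 2 * (ε / (4 * V)) = ε / (2 * V) by ring, div_le_iff₀ (by linarith)]
      linarith
    have hexp : -(ε / (4 * V)) * ε + 2 * (ε / (4 * V)) ^ 2 * V = -(ε ^ 2) / (8 * V) := by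
      field_simp
      ring
    simpa only [hexp] using chernoff (ε / (4 * V)) (div_nonneg hε.le (by linarith)) hti
  · intro hlarge
    have hi0 : (0 : ℝ) ≤ i := Nat.cast_nonneg i
    have hexp : -(i / 2 : ℝ) * ε + 2 * (i / 2 : ℝ) ^ 2 * V ≤ -(i * ε) / 4 := by
      nlinarith [mul_le_mul_of_nonneg_left hlarge.le hi0]
    refine (chernoff (i / 2) (by positivity) (by linarith)).trans (ENNReal.ofReal_le_ofReal ?_)
    gcongr

end
end

section
/- Fix i ∈ {1,…,n} and ε > 2i·Σ_{j=i}^n j^{−2}. Then P(W_{(i)}(n) > U(exp(Σ_{j=i}^n 1/j + ε))) ≤ 2·exp(−iε/4) and P(W_{(i)}(n) < U(exp(Σ_{j=i}^n 1/j − ε))) ≤ 2·exp(−iε/4). -/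
open MeasureTheory ProbabilityTheory Filter Real

noncomputable section

variable {Ω : Type*} [mΩ : MeasurableSpace Ω]

/-!
With `t = exp (S ± ε)`, `S = ∑_{j=i}^n 1/j`, continuity of `F` gives `F (U t) = 1 - 1/t`, so
`W_(i)(n) > U t` forces at least `i`, and `W_(i)(n) < U t` fewer than `i`, of the `W_j` to exceed
`U t`: binomial events with success probability `p = 1/t`. Put `θ = ⌈i/2⌉` and
`V = ∑_{j=i}^n 1/j²`. The upper tail is bounded by Markov's inequality for the `θ`-th factorial
moment, `P(X ≥ i) ≤ C(n, θ) p^θ / C(i, θ)`, and the lower tail by comparing derivatives in `p`,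
which gives `p^θ P(X < i) ≤ ∏_{j=i}^n j / (j + θ)`. Both ratios of binomial coefficients are
`exp (±θ S + O(θ² V))`, and for `θ ≈ i/2` and `2 i V < ε` the resulting exponent `θ² V - θ ε` is
at most `-i ε / 4`.
-/

open Finset

def binomTerm (n : ℕ) (p : ℝ) (k : ℕ) : ℝ := n.choose k * p ^ k * (1 - p) ^ (n - k)

section Binomial

variable {n i : ℕ} {p : ℝ}

lemma binomTerm_nonneg (hp0 : 0 ≤ p) (hp1 : p ≤ 1) (k : ℕ) : 0 ≤ binomTerm n p k := by
  unfold binomTerm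
  have : 0 ≤ 1 - p := by linarith
  positivity

lemma sum_range_binomTerm (n : ℕ) (p : ℝ) : ∑ k ∈ range (n + 1), binomTerm n p k = 1 := by
  have h := add_pow p (1 - p) n
  rw [add_sub_cancel, one_pow] at h
  rw [h]
  exact sum_congr rfl fun k _ => by rw [binomTerm]; ring

lemma sum_range_binomTerm_le_one (hp0 : 0 ≤ p) (hp1 : p ≤ 1) (hin : i ≤ n + 1) :
    ∑ k ∈ range i, binomTerm n p k ≤ 1 := by
  rw [← sum_range_binomTerm n p]
  exact sum_le_sum_of_subset_of_nonneg (range_subset_range.mpr hin)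
    fun k _ _ => binomTerm_nonneg hp0 hp1 k

lemma sum_range_binomTerm_one (hin : i ≤ n) : ∑ k ∈ range i, binomTerm n 1 k = 0 :=
  sum_eq_zero fun k hk => by
    have : n - k ≠ 0 := by have := mem_range.mp hk; omega
    simp [binomTerm, zero_pow this]

-- The derivative is `g k - g (k + 1)` with `g k = k C(n, k) p^(k-1) (1-p)^(n-k)`, so partial
-- sums over `range i` telescope.
lemma hasDerivAt_binomTerm (n k : ℕ) (p : ℝ) :
    HasDerivAt (fun p => binomTerm n p k)
      (k * n.choose k * p ^ (k - 1) * (1 - p) ^ (n - k)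
        - (k + 1 : ℕ) * n.choose (k + 1) * p ^ (k + 1 - 1) * (1 - p) ^ (n - (k + 1))) p := by
  have hchoose : ((k + 1 : ℕ) : ℝ) * n.choose (k + 1) = n.choose k * (n - k : ℕ) := by
    exact_mod_cast (mul_comm _ _).trans (Nat.choose_succ_right_eq n k)
  have h := (((hasDerivAt_pow k p).mul (((hasDerivAt_id p).const_sub 1).fun_pow (n - k))).const_mul
      (n.choose k : ℝ))
  refine (h.congr_deriv ?_).congr_of_eventuallyEq
    (Filter.Eventually.of_forall fun x => by simp [binomTerm, mul_assoc])
  rw [hchoose, Nat.add_sub_cancel, show n - (k + 1) = n - k - 1 by omega]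
  simp only [id]
  ring

lemma hasDerivAt_sum_range_binomTerm (n i : ℕ) (p : ℝ) :
    HasDerivAt (fun p => ∑ k ∈ range i, binomTerm n p k)
      (-(i * n.choose i * p ^ (i - 1) * (1 - p) ^ (n - i))) p := by
  have h := HasDerivAt.fun_sum (u := range i) fun k _ => hasDerivAt_binomTerm n k p
  rw [sum_range_sub' (fun k : ℕ => (k : ℝ) * n.choose k * p ^ (k - 1) * (1 - p) ^ (n - k))]
    at h
  simpa using h

lemma sum_range_choose_mul_binomTerm {θ : ℕ} (hθ : θ ≤ n) (p : ℝ) :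
    ∑ k ∈ range (n + 1), (k.choose θ : ℝ) * binomTerm n p k = n.choose θ * p ^ θ := by
  rw [← sum_range_add_sum_Ico _ (by omega : θ ≤ n + 1), sum_Ico_eq_sum_range,
    show n + 1 - θ = n - θ + 1 by omega]
  have hlow : ∑ k ∈ range θ, (k.choose θ : ℝ) * binomTerm n p k = 0 :=
    sum_eq_zero fun k hk => by simp [Nat.choose_eq_zero_of_lt (mem_range.mp hk)]
  have hterm : ∀ m, ((θ + m).choose θ : ℝ) * binomTerm n p (θ + m)
      = n.choose θ * p ^ θ * binomTerm (n - θ) p m := fun m => by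
    have h := Nat.choose_mul (n := n) (k := θ + m) (s := θ) (by omega)
    rw [Nat.add_sub_cancel_left] at h
    have h' : (n.choose (θ + m) : ℝ) * (θ + m).choose θ = n.choose θ * (n - θ).choose m := by
      exact_mod_cast h
    rw [binomTerm, binomTerm, show n - (θ + m) = n - θ - m by omega, pow_add]
    linear_combination p ^ θ * p ^ m * (1 - p) ^ (n - θ - m) * h'
  rw [hlow, zero_add, sum_congr rfl fun m _ => hterm m, ← mul_sum, sum_range_binomTerm, mul_one]

/-- Markov's inequality for the `θ`-th factorial moment. -/
lemma choose_mul_sum_Icc_binomTerm_le {θ : ℕ} (hθ : θ ≤ n) (hp0 : 0 ≤ p) (hp1 : p ≤ 1) :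
    (i.choose θ : ℝ) * ∑ k ∈ Icc i n, binomTerm n p k ≤ n.choose θ * p ^ θ := by
  rw [← sum_range_choose_mul_binomTerm hθ, mul_sum]
  calc ∑ k ∈ Icc i n, (i.choose θ : ℝ) * binomTerm n p k
      ≤ ∑ k ∈ Icc i n, (k.choose θ : ℝ) * binomTerm n p k :=
        sum_le_sum fun k hk => mul_le_mul_of_nonneg_right
          (by exact_mod_cast Nat.choose_le_choose θ (mem_Icc.mp hk).1) (binomTerm_nonneg hp0 hp1 k)
    _ ≤ ∑ k ∈ range (n + 1), (k.choose θ : ℝ) * binomTerm n p k :=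
        sum_le_sum_of_subset_of_nonneg
          (fun k hk => mem_range.mpr (Nat.lt_succ_of_le (mem_Icc.mp hk).2))
          fun k _ _ => mul_nonneg (Nat.cast_nonneg _) (binomTerm_nonneg hp0 hp1 k)

lemma pow_mul_sum_range_binomTerm_le (θ : ℕ) (hi : 1 ≤ i) (hin : i ≤ n) (hp0 : 0 ≤ p)
    (hp1 : p ≤ 1) :
    ((i + θ : ℕ) * (n + θ).choose (i + θ) : ℝ) * p ^ θ * ∑ k ∈ range i, binomTerm n p k
      ≤ i * n.choose i := by
  set a : ℝ := i * n.choose i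
  set b : ℝ := (i + θ : ℕ) * (n + θ).choose (i + θ)
  set Φ : ℝ → ℝ := fun x =>
    a * ∑ k ∈ range (i + θ), binomTerm (n + θ) x k - b * (x ^ θ * ∑ k ∈ range i, binomTerm n x k)
  -- the constants `a`, `b` make the density terms of `Φ'` cancel, and `Φ 1 = 0`
  have hΦ : ∀ x, HasDerivAt Φ (-(b * (θ * x ^ (θ - 1) * ∑ k ∈ range i, binomTerm n x k))) x := by
    intro x
    have h := ((hasDerivAt_sum_range_binomTerm (n + θ) (i + θ) x).const_mul a).sub
      (((hasDerivAt_pow θ x).mul (hasDerivAt_sum_range_binomTerm n i x)).const_mul b)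
    refine h.congr_deriv ?_
    rw [Nat.add_sub_add_right, show i + θ - 1 = θ + (i - 1) by omega, pow_add]
    ring
  have hanti : AntitoneOn Φ (Set.Icc 0 1) := by
    refine antitoneOn_of_deriv_nonpos (convex_Icc 0 1) (HasDerivAt.continuousOn fun x _ => hΦ x)
      (fun x _ => (hΦ x).differentiableAt.differentiableWithinAt) fun x hx => ?_
    rw [interior_Icc] at hx
    rw [(hΦ x).deriv, neg_nonpos]
    have := sum_nonneg fun k (_ : k ∈ range i) => binomTerm_nonneg (n := n) hx.1.le hx.2.le k
    have : 0 ≤ x ^ (θ - 1) := pow_nonneg hx.1.le _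
    positivity
  have hΦ1 : Φ 1 = 0 := by
    simp only [Φ, sum_range_binomTerm_one hin, sum_range_binomTerm_one (by omega : i + θ ≤ n + θ)]
    ring
  have hΦp := hanti ⟨hp0, hp1⟩ ⟨zero_le_one, le_rfl⟩ hp1
  have hle := sum_range_binomTerm_le_one (n := n + θ) hp0 hp1 (by omega : i + θ ≤ n + θ + 1)
  have ha : 0 ≤ a := by positivity
  simp only [Φ, hΦ1] at hΦp
  nlinarith
end Binomial

lemma one_le_one_sub_mul_exp {x : ℝ} (hx0 : 0 ≤ x) (hx : x ≤ 1 / 2) :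
    1 ≤ (1 - x) * exp (x + x ^ 2) := by
  have h := quadratic_le_exp_of_nonneg (by positivity : 0 ≤ x + x ^ 2)
  have hx3 : 0 ≤ x ^ 3 := by positivity
  nlinarith [mul_le_mul_of_nonneg_left h (by linarith : 0 ≤ 1 - x)]

lemma exp_sub_sq_le_one_add {x : ℝ} (hx : 0 ≤ x) : exp (x - x ^ 2) ≤ 1 + x := by
  have hlog := one_sub_inv_le_log_of_pos (by linarith : 0 < 1 + x)
  rw [← exp_log (by linarith : 0 < 1 + x), exp_le_exp]
  refine le_trans ?_ hlog
  rw [show 1 - (1 + x)⁻¹ = x / (1 + x) by field_simp; ring, le_div_iff₀ (by linarith)]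
  nlinarith [pow_nonneg hx 3]

section RatioBounds
variable {n i θ : ℕ}

/-- `C(n, θ) / C(i, θ) = ∏_{j = i+1}^n j / (j - θ)`, each factor at most `exp (θ/j + θ²/j²)`. -/
lemma choose_le_choose_mul_exp (hθ : 2 * θ ≤ i + 1) (hin : i ≤ n) :
    (n.choose θ : ℝ) ≤ i.choose θ *
      exp (θ * ∑ j ∈ Icc i n, (1 : ℝ) / j + θ ^ 2 * ∑ j ∈ Icc i n, (1 : ℝ) / j ^ 2) := by
  induction n, hin using Nat.le_induction with
  | base =>
    refine le_mul_of_one_le_right (Nat.cast_nonneg _) (one_le_exp ?_)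
    positivity
  | succ m him ih =>
    rw [sum_Icc_succ_top (by omega), sum_Icc_succ_top (by omega)]
    set x : ℝ := θ / (m + 1 : ℕ)
    have hm : (0 : ℝ) < (m + 1 : ℕ) := by positivity
    have hx : x ≤ 1 / 2 := by
      have : (2 * θ : ℝ) ≤ (m + 1 : ℕ) := by exact_mod_cast (by omega : 2 * θ ≤ m + 1)
      rw [div_le_iff₀ hm]; linarith
    have hstep : ((m + 1).choose θ : ℝ) * (1 - x) = m.choose θ := by
      have h : ((m.choose θ * (m + 1) : ℕ) : ℝ) = ((m + 1).choose θ * (m + 1 - θ) : ℕ) :=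
        congrArg _ (Nat.choose_mul_succ_eq m θ)
      rw [Nat.cast_mul, Nat.cast_mul, Nat.cast_sub (by omega)] at h
      simp only [x]
      field_simp
      push_cast at h ⊢
      linarith
    calc ((m + 1).choose θ : ℝ)
        ≤ (m + 1).choose θ * ((1 - x) * exp (x + x ^ 2)) :=
          le_mul_of_one_le_right (Nat.cast_nonneg _) (one_le_one_sub_mul_exp (by positivity) hx)
      _ = m.choose θ * exp (x + x ^ 2) := by rw [← mul_assoc, hstep]
      _ ≤ i.choose θ * exp (θ * ∑ j ∈ Icc i m, (1 : ℝ) / j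
            + θ ^ 2 * ∑ j ∈ Icc i m, (1 : ℝ) / j ^ 2) * exp (x + x ^ 2) :=
          mul_le_mul_of_nonneg_right ih (exp_pos _).le
      _ = _ := by
          rw [mul_assoc, ← exp_add]
          congr 2
          simp only [x]
          ring

lemma mul_exp_sub_le_add {m : ℝ} (hm : 0 < m) {θ : ℝ} (hθ : 0 ≤ θ) :
    m * exp (θ * (1 / m) - θ ^ 2 * (1 / m ^ 2)) ≤ m + θ := by
  have h := exp_sub_sq_le_one_add (div_nonneg hθ hm.le)
  calc m * exp (θ * (1 / m) - θ ^ 2 * (1 / m ^ 2)) = m * exp (θ / m - (θ / m) ^ 2) := by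
        congr 2; field_simp
    _ ≤ m * (1 + θ / m) := mul_le_mul_of_nonneg_left h hm.le
    _ = m + θ := by field_simp

/-- `i C(n, i) / ((i + θ) C(n + θ, i + θ)) = ∏_{j = i}^n j / (j + θ)`, each factor at most
`exp (θ²/j² - θ/j)`. -/
lemma mul_choose_mul_exp_le (hi : 1 ≤ i) (hin : i ≤ n) :
    (i * n.choose i : ℝ) *
        exp (θ * ∑ j ∈ Icc i n, (1 : ℝ) / j - θ ^ 2 * ∑ j ∈ Icc i n, (1 : ℝ) / j ^ 2)
      ≤ (i + θ : ℕ) * (n + θ).choose (i + θ) := by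
  induction n, hin using Nat.le_induction with
  | base =>
    have h := mul_exp_sub_le_add (by exact_mod_cast hi : (0 : ℝ) < i) (Nat.cast_nonneg θ)
    simpa using h
  | succ m him ih =>
    rw [sum_Icc_succ_top (by omega), sum_Icc_succ_top (by omega)]
    have hm : (0 : ℝ) < (m + 1 : ℕ) := by positivity
    have hL : ((m + 1).choose i : ℝ) * (m + 1 - i : ℕ) = m.choose i * (m + 1 : ℕ) := by
      exact_mod_cast (Nat.choose_mul_succ_eq m i).symm
    have hR : ((m + 1 + θ).choose (i + θ) : ℝ) * (m + 1 - i : ℕ)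
        = (m + θ).choose (i + θ) * (m + 1 + θ : ℕ) := by
      have h := (Nat.choose_mul_succ_eq (m + θ) (i + θ)).symm
      rw [show m + θ + 1 - (i + θ) = m + 1 - i by omega, show m + θ + 1 = m + 1 + θ by omega] at h
      exact_mod_cast h
    have hstep := mul_exp_sub_le_add hm (Nat.cast_nonneg θ)
    have hpos : (0 : ℝ) < (m + 1 - i : ℕ) := by exact_mod_cast (by omega : 0 < m + 1 - i)
    refine le_of_mul_le_mul_right ?_ hpos
    set E := θ * ∑ j ∈ Icc i m, (1 : ℝ) / j - θ ^ 2 * ∑ j ∈ Icc i m, (1 : ℝ) / j ^ 2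
    set δ := θ * ((1 : ℝ) / (m + 1 : ℕ)) - θ ^ 2 * ((1 : ℝ) / (m + 1 : ℕ) ^ 2)
    calc (i * (m + 1).choose i : ℝ) * exp (θ * (∑ j ∈ Icc i m, (1 : ℝ) / j + 1 / (m + 1 : ℕ))
          - θ ^ 2 * (∑ j ∈ Icc i m, (1 : ℝ) / j ^ 2 + 1 / (m + 1 : ℕ) ^ 2)) * (m + 1 - i : ℕ)
        = (i * m.choose i : ℝ) * exp E * ((m + 1 : ℕ) * exp δ) := by
          rw [show θ * (∑ j ∈ Icc i m, (1 : ℝ) / j + 1 / (m + 1 : ℕ))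
              - θ ^ 2 * (∑ j ∈ Icc i m, (1 : ℝ) / j ^ 2 + 1 / (m + 1 : ℕ) ^ 2) = E + δ by ring,
            exp_add]
          linear_combination (i : ℝ) * exp E * exp δ * hL
      _ ≤ (i + θ : ℕ) * (m + θ).choose (i + θ) * ((m + 1 : ℕ) + θ) :=
          mul_le_mul ih hstep (by positivity) (by positivity)
      _ = (i + θ : ℕ) * (m + 1 + θ).choose (i + θ) * (m + 1 - i : ℕ) := by
          rw [mul_assoc, mul_assoc, hR]; push_cast; ring
end RatioBounds

lemma sq_mul_sub_mul_le {i θ V ε : ℝ} (hi : 1 ≤ i) (hθ : i ≤ 2 * θ) (hθ' : 2 * θ ≤ i + 1)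
    (hV : 0 ≤ V) (hε : 2 * i * V ≤ ε) :
    θ ^ 2 * V - θ * ε ≤ -(i * ε) / 4 := by
  have hε0 : 0 ≤ ε := le_trans (by positivity) hε
  have hVε : V ≤ ε / (2 * i) := by rw [le_div_iff₀ (by positivity)]; linarith
  have hquad : 2 * θ ^ 2 - 4 * i * θ + i ^ 2 ≤ 0 := by
    nlinarith [mul_nonneg (sub_nonneg.2 hθ) (by linarith : 0 ≤ i + 1 - 2 * θ)]
  have hrest : ε * (2 * θ ^ 2 - 4 * i * θ + i ^ 2) / (4 * i) ≤ 0 :=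
    div_nonpos_of_nonpos_of_nonneg (mul_nonpos_of_nonneg_of_nonpos hε0 hquad) (by positivity)
  calc θ ^ 2 * V - θ * ε ≤ θ ^ 2 * (ε / (2 * i)) - θ * ε := by gcongr
    _ = -(i * ε) / 4 + ε * (2 * θ ^ 2 - 4 * i * θ + i ^ 2) / (4 * i) := by field_simp; ring
    _ ≤ -(i * ε) / 4 := by linarith

section TailBounds
variable {n i : ℕ} {ε : ℝ}

lemma sum_Icc_binomTerm_exp_le (hi : 1 ≤ i) (hin : i ≤ n)
    (hε : 2 * i * ∑ j ∈ Icc i n, (1 : ℝ) / j ^ 2 ≤ ε) :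
    ∑ k ∈ Icc i n, binomTerm n (exp (-(∑ j ∈ Icc i n, (1 : ℝ) / j + ε))) k
      ≤ exp (-(i * ε) / 4) := by
  set S := ∑ j ∈ Icc i n, (1 : ℝ) / j
  set V := ∑ j ∈ Icc i n, (1 : ℝ) / j ^ 2
  set θ := (i + 1) / 2
  have hV : 0 ≤ V := sum_nonneg fun j _ => by positivity
  have hS : 0 ≤ S := sum_nonneg fun j _ => by positivity
  have hε0 : 0 ≤ ε := le_trans (by positivity) hε
  have hchoose : (0 : ℝ) < i.choose θ := by exact_mod_cast Nat.choose_pos (by omega)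
  have hexp : θ ^ 2 * V - θ * ε ≤ -(i * ε) / 4 :=
    sq_mul_sub_mul_le (by exact_mod_cast hi) (by exact_mod_cast (by omega : i ≤ 2 * θ))
      (by exact_mod_cast (by omega : 2 * θ ≤ i + 1)) hV hε
  refine le_of_mul_le_mul_left ?_ hchoose
  calc (i.choose θ : ℝ) * ∑ k ∈ Icc i n, binomTerm n (exp (-(S + ε))) k
      ≤ n.choose θ * exp (-(S + ε)) ^ θ :=
        choose_mul_sum_Icc_binomTerm_le (by omega) (exp_pos _).le
          (exp_le_one_iff.mpr (by linarith))
    _ ≤ i.choose θ * exp (θ * S + θ ^ 2 * V) * exp (-(S + ε)) ^ θ :=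
        mul_le_mul_of_nonneg_right (choose_le_choose_mul_exp (by omega) hin) (by positivity)
    _ = i.choose θ * exp (θ ^ 2 * V - θ * ε) := by
        rw [← exp_nat_mul, mul_assoc, ← exp_add]; congr 2; ring
    _ ≤ i.choose θ * exp (-(i * ε) / 4) := by gcongr

lemma sum_range_binomTerm_exp_le (hi : 1 ≤ i) (hin : i ≤ n)
    (hε : 2 * i * ∑ j ∈ Icc i n, (1 : ℝ) / j ^ 2 ≤ ε) (hεS : ε ≤ ∑ j ∈ Icc i n, (1 : ℝ) / j) :
    ∑ k ∈ range i, binomTerm n (exp (-(∑ j ∈ Icc i n, (1 : ℝ) / j - ε))) k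
      ≤ exp (-(i * ε) / 4) := by
  set S := ∑ j ∈ Icc i n, (1 : ℝ) / j
  set V := ∑ j ∈ Icc i n, (1 : ℝ) / j ^ 2
  set θ := (i + 1) / 2
  set p := exp (-(S - ε))
  have hV : 0 ≤ V := sum_nonneg fun j _ => by positivity
  have hexp : θ ^ 2 * V - θ * ε ≤ -(i * ε) / 4 :=
    sq_mul_sub_mul_le (by exact_mod_cast hi) (by exact_mod_cast (by omega : i ≤ 2 * θ))
      (by exact_mod_cast (by omega : 2 * θ ≤ i + 1)) hV hε
  set b : ℝ := (i + θ : ℕ) * (n + θ).choose (i + θ)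
  have hb : 0 < b := by
    have : 0 < (n + θ).choose (i + θ) := Nat.choose_pos (by omega)
    positivity
  have hmoment : b * p ^ θ * ∑ k ∈ range i, binomTerm n p k ≤ i * n.choose i :=
    pow_mul_sum_range_binomTerm_le θ hi hin (exp_pos _).le (exp_le_one_iff.mpr (by linarith))
  have hpθ : p ^ θ * exp (θ * S - θ ^ 2 * V) = exp (-(θ ^ 2 * V - θ * ε)) := by
    rw [← exp_nat_mul, ← exp_add]; congr 1; ring
  have hnorm : b * (exp (-(θ ^ 2 * V - θ * ε)) * ∑ k ∈ range i, binomTerm n p k) ≤ b * 1 :=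
    calc _ = b * p ^ θ * (∑ k ∈ range i, binomTerm n p k) * exp (θ * S - θ ^ 2 * V) := by
          rw [← hpθ]; ring
      _ ≤ i * n.choose i * exp (θ * S - θ ^ 2 * V) :=
          mul_le_mul_of_nonneg_right hmoment (exp_pos _).le
      _ ≤ b * 1 := (mul_choose_mul_exp_le hi hin).trans_eq (mul_one _).symm
  have h := le_of_mul_le_mul_left hnorm hb
  rw [exp_neg, inv_mul_le_iff₀ (exp_pos _), mul_one] at h
  exact h.trans (exp_le_exp.mpr hexp)
end TailBounds

section CDF
variable {F : ℝ → ℝ}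

lemma IsCDF.nonneg (hF : IsCDF F) (x : ℝ) : 0 ≤ F x := by
  rcases le_or_gt x 0 with h | h
  · rw [hF.2.2.1 x h]
  · exact (hF.2.2.1 0 le_rfl).symm.le.trans (hF.1 h.le)

lemma IsCDF.le_one (hF : IsCDF F) (x : ℝ) : F x ≤ 1 :=
  ge_of_tendsto hF.2.2.2 (eventually_atTop.2 ⟨x, fun _ hz => hF.1 hz⟩)

lemma IsCDF.apply_Finv (hF : IsCDF F) {y : ℝ} (hy0 : 0 < y) (hy1 : y < 1) :
    F (Finv F y) = y := by
  obtain ⟨hmono, hcont, hzero, htop⟩ := hF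
  have hne : {x | y ≤ F x}.Nonempty := (htop.eventually (eventually_ge_nhds hy1)).exists
  have hbdd : BddBelow {x | y ≤ F x} := ⟨0, fun x hx => by
    by_contra! hx0
    linarith [hzero x hx0.le, show y ≤ F x from hx]⟩
  refine le_antisymm ?_ ((isClosed_le continuous_const hcont).csInf_mem hne hbdd)
  -- left of the infimum `F < y`, and `F` is left continuous
  refine le_of_tendsto (hcont.continuousAt.tendsto.mono_left
    (nhdsWithin_le_nhds (s := Set.Iio (Finv F y))))
    (eventually_nhdsWithin_of_forall fun x hx => ?_)
  by_contra! h
  exact (not_le.mpr (Set.mem_Iio.mp hx)) (csInf_le hbdd h.le)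

lemma IsCDF.one_sub_apply_Ufun_exp (hF : IsCDF F) {s : ℝ} (hs : 0 < s) :
    1 - F (Ufun F (exp s)) = exp (-s) := by
  have hlt : exp (-s) < 1 := exp_lt_one_iff.mpr (by linarith)
  rw [Ufun, one_div, ← exp_neg, hF.apply_Finv (by linarith) (by linarith [exp_pos (-s)])]
  ring

/-- For `0 < t ≤ 1` every `x` reaches the level `1 - 1/t ≤ 0`, so `Ufun F t = sInf univ = 0`. -/
lemma IsCDF.apply_Ufun_of_le_one (hF : IsCDF F) {t : ℝ} (ht0 : 0 < t) (ht1 : t ≤ 1) :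
    F (Ufun F t) = 0 := by
  have huniv : {x | 1 - 1 / t ≤ F x} = Set.univ := Set.eq_univ_of_forall fun x => by
    have : 1 ≤ 1 / t := by rw [le_div_iff₀ ht0]; linarith
    show 1 - 1 / t ≤ F x
    linarith [hF.nonneg x]
  rw [Ufun, Finv, huniv, Real.sInf_univ]
  exact hF.2.2.1 0 le_rfl

end CDF

lemma IIDWith.measure_lt {P : Measure Ω} [IsProbabilityMeasure P] {F : ℝ → ℝ} {W : ℕ → Ω → ℝ}
    (hW : IIDWith P F W) (hF : IsCDF F) (u : ℝ) (j : ℕ) :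
    P {ω | u < W j ω} = ENNReal.ofReal (1 - F u) := by
  have hcompl : {ω | u < W j ω} = {ω | W j ω ≤ u}ᶜ := by ext ω; simp
  rw [hcompl, prob_compl_eq_one_sub (measurableSet_le (hW.1 j) measurable_const), hW.2.2 j u,
    ← ENNReal.ofReal_one, ← ENNReal.ofReal_sub 1 (hF.nonneg u)]

def exceedCount {ι : Type*} (s : Finset ι) (X : ι → ℝ) (u : ℝ) : ℕ := #{j ∈ s | u < X j}

section ExceedCount
variable {ι : Type*} {s : Finset ι} {X Y : ι → ℝ} {u : ℝ}

lemma exceedCount_congr (h : s.val.map X = s.val.map Y) :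
    exceedCount s X u = exceedCount s Y u := by
  have hcount : ∀ Z : ι → ℝ, exceedCount s Z u = (s.val.map Z).countP (u < ·) := fun Z => by
    rw [Multiset.countP_map]; rfl
  rw [hcount, hcount, h]

lemma exceedCount_le_card : exceedCount s X u ≤ s.card := card_filter_le _ _

lemma le_exceedCount {n i : ℕ} {X : ℕ → ℝ} (hX : AntitoneOn X (Icc 1 n : Finset ℕ))
    (hi : i ∈ Icc 1 n) (hu : u < X i) : i ≤ exceedCount (Icc 1 n) X u := by
  have hsub : Icc 1 i ⊆ {j ∈ Icc 1 n | u < X j} := fun j hj => by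
    obtain ⟨hj1, hji⟩ := mem_Icc.mp hj
    have hjn : j ∈ Icc 1 n := mem_Icc.mpr ⟨hj1, hji.trans (mem_Icc.mp hi).2⟩
    exact mem_filter.mpr ⟨hjn, hu.trans_le (hX hjn hi hji)⟩
  simpa [exceedCount] using card_le_card hsub

lemma exceedCount_lt {n i : ℕ} {X : ℕ → ℝ} (hX : AntitoneOn X (Icc 1 n : Finset ℕ))
    (hi : i ∈ Icc 1 n) (hu : X i ≤ u) : exceedCount (Icc 1 n) X u < i := by
  have hsub : {j ∈ Icc 1 n | u < X j} ⊆ Icc 1 (i - 1) := fun j hj => by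
    obtain ⟨hjn, hj⟩ := mem_filter.mp hj
    refine mem_Icc.mpr ⟨(mem_Icc.mp hjn).1, ?_⟩
    by_contra! hij
    exact (hX hi hjn (by omega)).not_gt (hu.trans_lt hj)
  have := card_le_card hsub
  simp only [Nat.card_Icc] at this
  have := (mem_Icc.mp hi).1
  unfold exceedCount; omega

end ExceedCount

section Independence
variable {ι : Type*} {P : Measure Ω} [IsProbabilityMeasure P] {W : ι → Ω → ℝ} {u p : ℝ}

lemma measure_iInter_preimage_ite [DecidableEq ι] (hmeas : ∀ j, Measurable (W j))
    (hindep : iIndepFun W P) (hp0 : 0 ≤ p) (hp1 : p ≤ 1)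
    (hdist : ∀ j, P {ω | u < W j ω} = ENNReal.ofReal p) {s T : Finset ι} (hT : T ⊆ s) :
    P (⋂ j ∈ s, W j ⁻¹' (if j ∈ T then Set.Ioi u else Set.Iic u))
      = ENNReal.ofReal (p ^ #T * (1 - p) ^ (#s - #T)) := by
  have hfactor : ∀ j, P (W j ⁻¹' (if j ∈ T then Set.Ioi u else Set.Iic u))
      = if j ∈ T then ENNReal.ofReal p else ENNReal.ofReal (1 - p) := fun j => by
    split_ifs
    · exact hdist j
    · have hcompl : W j ⁻¹' Set.Iic u = {ω | u < W j ω}ᶜ := by ext ω; simp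
      rw [hcompl, prob_compl_eq_one_sub (measurableSet_lt measurable_const (hmeas j)), hdist j,
        ← ENNReal.ofReal_one, ← ENNReal.ofReal_sub 1 hp0]
  rw [iIndepFun_iff_measure_inter_preimage_eq_mul.mp hindep s
      (fun j _ => by split_ifs; exacts [measurableSet_Ioi, measurableSet_Iic]),
    prod_congr rfl fun j _ => hfactor j, ← union_sdiff_of_subset hT,
    prod_union disjoint_sdiff, prod_congr rfl fun j hj => if_pos hj,
    prod_congr rfl fun j hj => if_neg (mem_sdiff.mp hj).2, prod_const, prod_const,
    union_sdiff_of_subset hT, card_sdiff_of_subset hT, ENNReal.ofReal_mul (by positivity),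
    ENNReal.ofReal_pow hp0, ENNReal.ofReal_pow (by linarith)]

lemma measure_exceedCount_mem_le (hmeas : ∀ j, Measurable (W j)) (hindep : iIndepFun W P)
    (hp0 : 0 ≤ p) (hp1 : p ≤ 1) (hdist : ∀ j, P {ω | u < W j ω} = ENNReal.ofReal p)
    (s : Finset ι) (K : Finset ℕ) :
    P {ω | exceedCount s (W · ω) u ∈ K} ≤ ENNReal.ofReal (∑ k ∈ K, binomTerm #s p k) := by
  classical
  set TS := {T ∈ s.powerset | #T ∈ K}
  set E : Finset ι → Set Ω := fun T => ⋂ j ∈ s, W j ⁻¹' (if j ∈ T then Set.Ioi u else Set.Iic u)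
  -- the event is partitioned according to the set of indices exceeding `u`
  have hcover : {ω | exceedCount s (W · ω) u ∈ K} ⊆ ⋃ T ∈ TS, E T := fun ω hω => by
    refine Set.mem_biUnion (x := {j ∈ s | u < W j ω})
      (mem_filter.mpr ⟨mem_powerset.mpr (filter_subset _ _), hω⟩)
      (Set.mem_iInter₂.mpr fun j hj => ?_)
    by_cases h : u < W j ω
    · simp [hj, h]
    · simpa [hj, h] using not_lt.mp h
  have hsum : ∑ T ∈ TS, p ^ #T * (1 - p) ^ (#s - #T) ≤ ∑ k ∈ K, binomTerm #s p k := by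
    rw [sum_filter,
      sum_powerset_apply_card fun k => if k ∈ K then p ^ k * (1 - p) ^ (#s - k) else 0]
    calc ∑ m ∈ range (#s + 1), (#s).choose m • (if m ∈ K then p ^ m * (1 - p) ^ (#s - m) else 0)
        = ∑ m ∈ range (#s + 1) with m ∈ K, binomTerm #s p m := by
          rw [sum_filter]
          exact sum_congr rfl fun m _ => by split_ifs <;> simp [binomTerm, nsmul_eq_mul, mul_assoc]
      _ ≤ ∑ k ∈ K, binomTerm #s p k :=
          sum_le_sum_of_subset_of_nonneg (fun m hm => (mem_filter.mp hm).2)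
            fun k _ _ => binomTerm_nonneg hp0 hp1 k
  calc P {ω | exceedCount s (W · ω) u ∈ K}
      ≤ ∑ T ∈ TS, P (E T) := (measure_mono hcover).trans (measure_biUnion_finset_le TS E)
    _ = ∑ T ∈ TS, ENNReal.ofReal (p ^ #T * (1 - p) ^ (#s - #T)) := sum_congr rfl fun T hT =>
        measure_iInter_preimage_ite hmeas hindep hp0 hp1 hdist
          (mem_powerset.mp (mem_filter.mp hT).1)
    _ = ENNReal.ofReal (∑ T ∈ TS, p ^ #T * (1 - p) ^ (#s - #T)) :=
        (ENNReal.ofReal_sum_of_nonneg fun T _ => by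
          have : 0 ≤ 1 - p := by linarith
          positivity).symm
    _ ≤ _ := ENNReal.ofReal_le_ofReal hsum
end Independence

section OrderStatistics
variable {P : Measure Ω} [IsProbabilityMeasure P] {F : ℝ → ℝ} {W : ℕ → Ω → ℝ}
  {Wo : ℕ → ℕ → Ω → ℝ} {n i : ℕ}

lemma measure_lt_orderStat_le (hF : IsCDF F) (hW : IIDWith P F W) (hWo : IsOrderStats W Wo)
    (hi : i ∈ Icc 1 n) (u : ℝ) :
    P {ω | u < Wo n i ω} ≤ ENNReal.ofReal (∑ k ∈ Icc i n, binomTerm n (1 - F u) k) := by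
  have hsub : {ω | u < Wo n i ω} ⊆ {ω | exceedCount (Icc 1 n) (W · ω) u ∈ Icc i n} :=
    fun ω hω => by
      rw [Set.mem_ofPred_eq, ← exceedCount_congr (hWo.2.2 n ω)]
      exact mem_Icc.mpr ⟨le_exceedCount (hWo.2.1 n ω) hi hω,
        exceedCount_le_card.trans (by simp)⟩
  simpa using (measure_mono hsub).trans (measure_exceedCount_mem_le hW.1 hW.2.1
    (by linarith [hF.le_one u]) (by linarith [hF.nonneg u]) (hW.measure_lt hF u) _ _)

lemma measure_orderStat_lt_le (hF : IsCDF F) (hW : IIDWith P F W) (hWo : IsOrderStats W Wo)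
    (hi : i ∈ Icc 1 n) (u : ℝ) :
    P {ω | Wo n i ω < u} ≤ ENNReal.ofReal (∑ k ∈ range i, binomTerm n (1 - F u) k) := by
  have hsub : {ω | Wo n i ω < u} ⊆ {ω | exceedCount (Icc 1 n) (W · ω) u ∈ range i} :=
    fun ω hω => by
      rw [Set.mem_ofPred_eq, ← exceedCount_congr (hWo.2.2 n ω)]
      exact mem_range.mpr (exceedCount_lt (hWo.2.1 n ω) hi hω.le)
  simpa using (measure_mono hsub).trans (measure_exceedCount_mem_le hW.1 hW.2.1
    (by linarith [hF.le_one u]) (by linarith [hF.nonneg u]) (hW.measure_lt hF u) _ _)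

end OrderStatistics

theorem stmt3 (F : ℝ → ℝ) (hF : IsCDF F)
    (P : Measure Ω) [IsProbabilityMeasure P] (W : ℕ → Ω → ℝ) (Wo : ℕ → ℕ → Ω → ℝ)
    (hW : IIDWith P F W) (hWo : IsOrderStats W Wo)
    (n i : ℕ) (hi : i ∈ Finset.Icc 1 n) (ε : ℝ)
    (hε : 2 * i * ∑ j ∈ Finset.Icc i n, (1 : ℝ) / (j : ℝ) ^ 2 < ε) :
    P {ω | Ufun F (Real.exp ((∑ j ∈ Finset.Icc i n, (1 : ℝ) / (j : ℝ)) + ε)) < Wo n i ω}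
        ≤ ENNReal.ofReal (2 * Real.exp (-((i : ℝ) * ε) / 4)) ∧
    P {ω | Wo n i ω < Ufun F (Real.exp ((∑ j ∈ Finset.Icc i n, (1 : ℝ) / (j : ℝ)) - ε))}
        ≤ ENNReal.ofReal (2 * Real.exp (-((i : ℝ) * ε) / 4)) := by
  obtain ⟨hi1, hin⟩ := mem_Icc.mp hi
  set S := ∑ j ∈ Icc i n, (1 : ℝ) / j
  have hS : 0 ≤ S := sum_nonneg fun j _ => by positivity
  have hε0 : 0 < ε := lt_of_le_of_lt (by positivity) hε
  have hbound : ∀ {x : ℝ}, x ≤ exp (-(i * ε) / 4) →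
      ENNReal.ofReal x ≤ ENNReal.ofReal (2 * exp (-(i * ε) / 4)) := fun h =>
    ENNReal.ofReal_le_ofReal (h.trans (le_mul_of_one_le_left (exp_pos _).le one_le_two))
  constructor
  · refine (measure_lt_orderStat_le hF hW hWo hi _).trans (hbound ?_)
    rw [hF.one_sub_apply_Ufun_exp (by linarith)]
    exact sum_Icc_binomTerm_exp_le hi1 hin hε.le
  · refine (measure_orderStat_lt_le hF hW hWo hi _).trans (hbound ?_)
    rcases lt_or_ge ε S with hεS | hSε
    · rw [hF.one_sub_apply_Ufun_exp (by linarith)]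
      exact sum_range_binomTerm_exp_le hi1 hin hε.le hεS.le
    · rw [hF.apply_Ufun_of_le_one (exp_pos _) (exp_le_one_iff.mpr (by linarith)), sub_zero,
        sum_range_binomTerm_one hin]
      positivity

end
end

section
/- Assume conditions (RV) and (UL). Then for all z ≥ U(t₀) and all x ≥ 1, (1 − F(zx)) / (1 − F(z)) ≥ ((x − η)/(1 − η))^{−α}. -/
open MeasureTheory ProbabilityTheory Filter Real

noncomputable section

variable {Ω : Type*} [mΩ : MeasurableSpace Ω]

/-!
For `z ≥ U(t₀)` and a tail level `q < 1 - F z`, put `s = 1/q ≥ t₀`; then `U(s) > z`. Condition (UL)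
with `y = ((x - η)/(1 - η))^α`, chosen so that `(1 - η) y^γ + η = x`, gives `U(sy) ≥ x U(s) > xz`,
i.e. `1 - F(zx) > 1/(sy) = q/y`. Letting `q ↑ 1 - F z` proves the claim. That `1 - F z > 0` at all
comes from (UL) as well: it makes `U` unbounded.
-/

open Set

lemma one_sub_one_div_mem_Ioo {t : ℝ} (ht : 1 < t) : 1 - 1 / t ∈ Ioo 0 1 :=
  ⟨sub_pos.2 ((div_lt_one (zero_lt_one.trans ht)).2 ht),
    sub_lt_self _ (one_div_pos.2 (zero_lt_one.trans ht))⟩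

namespace IsCDF

variable {F : ℝ → ℝ} {t w y : ℝ}

lemma nonneg_s5 (hF : IsCDF F) (x : ℝ) : 0 ≤ F x :=
  (hF.2.2.1 _ (min_le_right x 0)).symm.le.trans (hF.1 (min_le_left x 0))

lemma bddBelow_setOf_le_apply (hF : IsCDF F) (hy : 0 < y) : BddBelow {x | y ≤ F x} :=
  ⟨0, fun x hx => not_lt.1 fun hx0 => hy.not_ge (hF.2.2.1 x hx0.le ▸ hx)⟩

lemma le_apply_Finv (hF : IsCDF F) (hy0 : 0 < y) (hy1 : y < 1) : y ≤ F (Finv F y) :=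
  (isClosed_le continuous_const hF.2.1).csInf_mem
    (hF.2.2.2.eventually (eventually_ge_nhds hy1)).exists (hF.bddBelow_setOf_le_apply hy0)

lemma Finv_le_iff (hF : IsCDF F) (hy0 : 0 < y) (hy1 : y < 1) : Finv F y ≤ w ↔ y ≤ F w :=
  ⟨fun h => (hF.le_apply_Finv hy0 hy1).trans (hF.1 h),
    fun h => csInf_le (hF.bddBelow_setOf_le_apply hy0) h⟩

lemma Finv_pos (hF : IsCDF F) (hy0 : 0 < y) (hy1 : y < 1) : 0 < Finv F y :=
  not_le.1 fun h => hy0.not_ge (hF.2.2.1 _ h ▸ hF.le_apply_Finv hy0 hy1)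

lemma Finv_of_nonpos (hF : IsCDF F) (hy : y ≤ 0) : Finv F y = 0 := by
  rw [Finv, show {x | y ≤ F x} = univ from eq_univ_of_forall fun x => hy.trans (hF.nonneg_s5 x),
    Real.sInf_univ]

lemma Ufun_le_iff (hF : IsCDF F) (ht : 1 < t) : Ufun F t ≤ w ↔ 1 - 1 / t ≤ F w :=
  hF.Finv_le_iff (one_sub_one_div_mem_Ioo ht).1 (one_sub_one_div_mem_Ioo ht).2

lemma lt_Ufun_iff (hF : IsCDF F) (ht : 1 < t) : w < Ufun F t ↔ F w < 1 - 1 / t := by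
  simpa only [not_le] using (hF.Ufun_le_iff ht).not

lemma Ufun_pos (hF : IsCDF F) (ht : 1 < t) : 0 < Ufun F t :=
  hF.Finv_pos (one_sub_one_div_mem_Ioo ht).1 (one_sub_one_div_mem_Ioo ht).2

end IsCDF

namespace CondUL

variable {F : ℝ → ℝ} {α t₀ η : ℝ}

lemma one_lt (hF : IsCDF F) (h : CondUL F α t₀ η) : 1 < t₀ := by
  obtain ⟨ht₀, -, -, hUL⟩ := h
  by_contra! ht₁
  have hU : Ufun F t₀ = 0 :=
    hF.Finv_of_nonpos (sub_nonpos.2 ((le_div_iff₀ ht₀).2 (by linarith)))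
  have := hUL t₀ le_rfl 1 le_rfl
  simp only [mul_one, hU, div_zero, one_rpow, sub_add_cancel] at this
  linarith

lemma apply_lt_one (hF : IsCDF F) (hα : 0 < α) (h : CondUL F α t₀ η) (z : ℝ) : F z < 1 := by
  have ht₀ := h.one_lt hF
  obtain ⟨-, -, hη, hUL⟩ := h
  have hgrowth : Tendsto (fun x => ((1 - η) * x ^ (1 / α) + η) * Ufun F t₀) atTop atTop :=
    (tendsto_atTop_add_const_right _ η ((tendsto_rpow_atTop (by positivity)).const_mul_atTop
      (by linarith))).atTop_mul_const (hF.Ufun_pos ht₀)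
  obtain ⟨x, hx, hzx⟩ := ((eventually_ge_atTop 1).and (hgrowth.eventually_gt_atTop z)).exists
  have ht₀x : 1 < t₀ * x := one_lt_mul_of_lt_of_le ht₀ hx
  have hz : z < Ufun F (t₀ * x) :=
    hzx.trans_le ((le_div_iff₀ (hF.Ufun_pos ht₀)).1 (hUL t₀ le_rfl x hx))
  linarith [(hF.lt_Ufun_iff ht₀x).1 hz, one_div_pos.2 (zero_lt_one.trans ht₀x)]

lemma apply_mul_lt (hF : IsCDF F) (h : CondUL F α t₀ η) {s y z : ℝ} (hs : t₀ ≤ s) (hy : 1 ≤ y)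
    (hz : F z < 1 - 1 / s) : F (z * ((1 - η) * y ^ (1 / α) + η)) < 1 - 1 / (s * y) := by
  have hs₁ : 1 < s := (h.one_lt hF).trans_le hs
  obtain ⟨-, hη₀, hη₁, hUL⟩ := h
  have hx : 0 < (1 - η) * y ^ (1 / α) + η := by
    have := rpow_pos_of_pos (zero_lt_one.trans_le hy) (1 / α)
    nlinarith
  refine (hF.lt_Ufun_iff (one_lt_mul_of_lt_of_le hs₁ hy)).1 ?_
  calc z * ((1 - η) * y ^ (1 / α) + η)
      < Ufun F s * ((1 - η) * y ^ (1 / α) + η) :=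
        mul_lt_mul_of_pos_right ((hF.lt_Ufun_iff hs₁).2 hz) hx
    _ ≤ Ufun F (s * y) := by
        rw [mul_comm]
        exact (le_div_iff₀ (hF.Ufun_pos hs₁)).1 (hUL s hs y hy)

lemma rpow_neg_mul_lt_one_sub_apply (hF : IsCDF F) (hα : 0 < α) (h : CondUL F α t₀ η)
    {q x z : ℝ} (hq : 0 < q) (hqt₀ : q ≤ 1 / t₀) (hx : 1 ≤ x) (hz : q < 1 - F z) :
    ((x - η) / (1 - η)) ^ (-α) * q < 1 - F (z * x) := by
  have hη : 0 < 1 - η := sub_pos.2 h.2.2.1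
  set c := (x - η) / (1 - η) with hc_def
  have hc : 1 ≤ c := (one_le_div hη).2 (by linarith)
  have hcx : (1 - η) * (c ^ α) ^ (1 / α) + η = x := by
    rw [one_div, rpow_rpow_inv (by linarith) hα.ne', hc_def, mul_div_cancel₀ _ hη.ne']
    ring
  have hs : t₀ ≤ 1 / q := by
    rwa [le_one_div h.1 hq]
  have := h.apply_mul_lt hF hs (one_le_rpow hc hα.le) (by rw [one_div_one_div]; linarith)
  rw [hcx, show 1 / (1 / q * c ^ α) = (c ^ α)⁻¹ * q by field_simp] at this
  rw [rpow_neg (by linarith)]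
  linarith

end CondUL

theorem stmt5_general (F : ℝ → ℝ) (hF : IsCDF F) (α t₀ η : ℝ) (hα : 0 < α)
    (hUL : CondUL F α t₀ η) :
    ∀ z ≥ Ufun F t₀, ∀ x ≥ (1 : ℝ),
      ((x - η) / (1 - η)) ^ (-α) ≤ (1 - F (z * x)) / (1 - F z) := by
  intro z hz x hx
  have hp : 0 < 1 - F z := sub_pos.2 (hUL.apply_lt_one hF hα z)
  have hpt₀ : 1 - F z ≤ 1 / t₀ := by
    linarith [(hF.Ufun_le_iff (hUL.one_lt hF)).1 hz]
  -- Only levels `q < 1 - F z` guarantee `U(1/q) > z` (`F` may be flat), hence the limit.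
  have hbound : ((x - η) / (1 - η)) ^ (-α) * (1 - F z) ≤ 1 - F (z * x) :=
    ContinuousWithinAt.closure_le (s := Ioo 0 (1 - F z))
      (by rw [closure_Ioo hp.ne]; exact right_mem_Icc.2 hp.le)
      (continuousWithinAt_const.mul continuousWithinAt_id) continuousWithinAt_const
      fun q hq => (hUL.rpow_neg_mul_lt_one_sub_apply hF hα hq.1 (hq.2.le.trans hpt₀) hx hq.2).le
  rwa [le_div_iff₀ hp]

theorem stmt5 (F : ℝ → ℝ) (hF : IsCDF F) (α t₀ η : ℝ) (hα : 0 < α)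
    (hRV : CondRV F α) (hUL : CondUL F α t₀ η) :
    ∀ z ≥ Ufun F t₀, ∀ x ≥ (1 : ℝ),
      ((x - η) / (1 - η)) ^ (-α) ≤ (1 - F (z * x)) / (1 - F z) :=
  stmt5_general F hF α t₀ η hα hUL

end
end

section
/- Let λ > 0, let n ≥ 2 be an integer, and let X be a Poisson random variable with mean λ. Then P( |X − λ| ≥ max(√(5·log(n)·λ), 5·log(n)) ) ≤ n^{−5/4}. -/
open MeasureTheory ProbabilityTheory Filter Real

noncomputable section

variable {Ω : Type*} [mΩ : MeasurableSpace Ω]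

/-! Chernoff's bound for the Poisson law, whose moment generating function is
`exp (r (e^θ - 1))`, taken at the optimal `θ = log (1 + d / r)`, bounds the probability of a
deviation `d` from the mean `r` (upwards for `d > 0`, downwards for `d < 0`) by
`exp (-r h (d / r))`, where `h x = (1 + x) log (1 + x) - x ≥ 3 x² / (2 (3 + x))`. With `L = log n`,
the deviation `t = max (√(5 L r)) (5 L)` makes the two tails at most `n^(-15/8)` and `n^(-45/16)`
when `r ≤ 45 L`, and both at most `n^(-9/4)` when `r > 45 L`; since `n ≥ 2`, either sum is below
`n^(-5/4)`. -/

open Set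
open scoped NNReal Nat

lemma hasDerivAt_one_add_mul_log_one_add_sub_sub {y : ℝ} (hy : -1 < y) :
    HasDerivAt (fun y => (1 + y) * log (1 + y) - y - 3 * y ^ 2 / (2 * (3 + y)))
      (log (1 + y) - 3 * y * (y + 6) / (2 * (3 + y) ^ 2)) y := by
  have h1 : 1 + y ≠ 0 := by linarith
  have h3 : 2 * (3 + y) ≠ 0 := by linarith
  have := ((((hasDerivAt_id y).const_add 1).mul (((hasDerivAt_id y).const_add 1).log h1)).sub
    (hasDerivAt_id y)).sub
    ((((hasDerivAt_id y).pow 2).const_mul 3).div (((hasDerivAt_id y).const_add 3).const_mul 2) h3)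
  refine this.congr_deriv ?_
  simp only [id, Pi.pow_apply]
  field_simp
  ring

/-- The difference of the two sides is convex on `(-1, ∞)`, its second derivative being
`x² (9 + x) / ((1 + x) (3 + x)³)`, and has a critical point at `0`. -/
lemma three_mul_sq_div_le_one_add_mul_log_one_add_sub {x : ℝ} (hx : -1 < x) :
    3 * x ^ 2 / (2 * (3 + x)) ≤ (1 + x) * log (1 + x) - x := by
  set g : ℝ → ℝ := fun y => (1 + y) * log (1 + y) - y - 3 * y ^ 2 / (2 * (3 + y))
  set g' : ℝ → ℝ := fun y => log (1 + y) - 3 * y * (y + 6) / (2 * (3 + y) ^ 2)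
  set g'' : ℝ → ℝ := fun y => 1 / (1 + y) - 27 / (3 + y) ^ 3
  have hg'' : ∀ y ∈ Ioi (-1 : ℝ), HasDerivAt g' (g'' y) y := by
    intro y (hy : -1 < y)
    have h1 : 1 + y ≠ 0 := by linarith
    have h3 : 3 + y ≠ 0 := by linarith
    have := (((hasDerivAt_id y).const_add 1).log h1).sub
      ((((hasDerivAt_id y).const_mul 3).mul ((hasDerivAt_id y).add_const 6)).div
        ((((hasDerivAt_id y).const_add 3).pow 2).const_mul 2) (by simpa using h3))
    refine this.congr_deriv ?_
    simp only [id, Pi.pow_apply, Pi.mul_apply, g'']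
    field_simp
    ring
  have hconv : ConvexOn ℝ (Ioi (-1)) g := by
    refine convexOn_of_hasDerivWithinAt2_nonneg (convex_Ioi _)
      (fun y hy => (hasDerivAt_one_add_mul_log_one_add_sub_sub hy).continuousAt.continuousWithinAt)
      (f' := g') (f'' := g'') ?_ ?_ ?_ <;> rw [interior_Ioi]
    · exact fun y hy => (hasDerivAt_one_add_mul_log_one_add_sub_sub hy).hasDerivWithinAt
    · exact fun y hy => (hg'' y hy).hasDerivWithinAt
    · intro y (hy : -1 < y)
      have h1 : 0 < 1 + y := by linarith
      have h3 : 0 < 3 + y := by linarith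
      rw [sub_nonneg, div_le_div_iff₀ (by positivity) h1]
      nlinarith [mul_nonneg (sq_nonneg y) (by linarith : (0 : ℝ) ≤ 9 + y)]
  have hmin : IsMinOn g (Ioi (-1)) 0 := by
    refine hconv.isMinOn_of_rightDeriv_eq_zero (by simp) ?_
    have := ((hasDerivAt_one_add_mul_log_one_add_sub_sub (y := 0) (by norm_num)).hasDerivWithinAt
      (s := Ioi 0)).derivWithin (uniqueDiffWithinAt_Ioi 0)
    simpa using this
  have h : 0 ≤ (1 + x) * log (1 + x) - x - 3 * x ^ 2 / (2 * (3 + x)) := by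
    simpa [g] using hmin (show x ∈ Ioi (-1) from hx)
  linarith

lemma exp_neg_mul_le_of_one_le_two_pow_mul_pow {L a c : ℝ} (hL : log 2 ≤ L) {p q : ℕ}
    (hq : q ≠ 0) (ha : a * q = p) (hc : 0 ≤ c) (h : 1 ≤ 2 ^ p * c ^ q) :
    exp (-(a * L)) ≤ c := by
  refine le_of_pow_le_pow_left₀ hq hc ?_
  calc exp (-(a * L)) ^ q = exp (-(p * L)) := by
        rw [← exp_nat_mul, ← ha]; ring_nf
    _ ≤ exp (-(p * log 2)) := by gcongr
    _ = (2 ^ p)⁻¹ := by rw [exp_neg, exp_nat_mul, exp_log two_pos]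
    _ ≤ c ^ q := by rwa [inv_le_iff_one_le_mul₀ (by positivity), mul_comm]

lemma exp_neg_add_exp_neg_le {L : ℝ} (hL : log 2 ≤ L) :
    exp (-(15 / 8 * L)) + exp (-(45 / 16 * L)) ≤ exp (-(5 / 4 * L)) := by
  have h₁ : exp (-(5 / 8 * L)) ≤ 13 / 20 :=
    exp_neg_mul_le_of_one_le_two_pow_mul_pow hL (p := 5) (q := 8) (by norm_num) (by norm_num)
      (by norm_num) (by norm_num)
  have h₂ : exp (-(25 / 16 * L)) ≤ 7 / 20 :=
    exp_neg_mul_le_of_one_le_two_pow_mul_pow hL (p := 25) (q := 16) (by norm_num) (by norm_num)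
      (by norm_num) (by norm_num)
  calc exp (-(15 / 8 * L)) + exp (-(45 / 16 * L))
      = (exp (-(5 / 8 * L)) + exp (-(25 / 16 * L))) * exp (-(5 / 4 * L)) := by
        rw [add_mul, ← exp_add, ← exp_add]; ring_nf
    _ ≤ 1 * exp (-(5 / 4 * L)) := by gcongr; linarith
    _ = exp (-(5 / 4 * L)) := one_mul _

lemma two_mul_exp_neg_le {L : ℝ} (hL : log 2 ≤ L) :
    2 * exp (-(9 / 4 * L)) ≤ exp (-(5 / 4 * L)) := by
  have h : exp (-(1 * L)) ≤ 1 / 2 :=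
    exp_neg_mul_le_of_one_le_two_pow_mul_pow hL (p := 1) (q := 1) one_ne_zero (by norm_num)
      (by norm_num) (by norm_num)
  calc 2 * exp (-(9 / 4 * L)) = 2 * exp (-(1 * L)) * exp (-(5 / 4 * L)) := by
        rw [mul_assoc, ← exp_add]; ring_nf
    _ ≤ 2 * (1 / 2) * exp (-(5 / 4 * L)) := by gcongr
    _ = exp (-(5 / 4 * L)) := by ring

lemma measure_preimage_le_of_forall_singleton {α : Type*} [Countable α] [MeasurableSpace α]
    [MeasurableSingletonClass α] {P : Measure Ω} {ν : Measure α} {X : Ω → α}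
    (h : ∀ a, P (X ⁻¹' {a}) ≤ ν {a}) (s : Set α) : P (X ⁻¹' s) ≤ ν s :=
  calc P (X ⁻¹' s) = P (⋃ a ∈ s, X ⁻¹' {a}) := by rw [biUnion_preimage_singleton]
    _ ≤ ∑' a : s, P (X ⁻¹' {(a : α)}) := measure_biUnion_le P s.to_countable _
    _ ≤ ∑' a : s, ν {(a : α)} := ENNReal.tsum_le_tsum fun a => h a
    _ = ν s := tsum_measure_preimage_singleton (f := id) s.to_countable
        fun _ _ => measurableSet_singleton _

namespace ProbabilityTheory

variable (r : ℝ≥0)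

lemma hasSum_poissonMeasure_mul_exp (θ : ℝ) :
    HasSum (fun n : ℕ => exp (-r) * r ^ n / n ! * exp (θ * n)) (exp (r * (exp θ - 1))) := by
  have e : (fun n : ℕ => exp (-r) * r ^ n / n ! * exp (θ * n))
      = fun n : ℕ => exp (-r) * ((r * exp θ) ^ n / n !) := by
    ext n
    rw [mul_pow, ← exp_nat_mul, mul_comm (n : ℝ) θ]
    ring
  rw [e, show (r : ℝ) * (exp θ - 1) = -r + r * exp θ by ring, exp_add]
  have := NormedSpace.expSeries_div_hasSum_exp ((r : ℝ) * exp θ)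
  rw [← exp_eq_exp_ℝ] at this
  exact this.mul_left _

lemma integrable_exp_mul_poissonMeasure (θ : ℝ) :
    Integrable (fun n : ℕ => exp (θ * n)) Po(r) := by
  rw [integrable_poissonMeasure_iff]
  simpa only [norm_of_nonneg (exp_pos _).le] using (hasSum_poissonMeasure_mul_exp r θ).summable

lemma mgf_poissonMeasure (θ : ℝ) :
    mgf (fun n : ℕ => (n : ℝ)) Po(r) θ = exp (r * (exp θ - 1)) := by
  rw [mgf, integral_poissonMeasure]
  exact (hasSum_poissonMeasure_mul_exp r θ).tsum_eq

variable {r}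

lemma exp_mul_mgf_poissonMeasure_le (hr : 0 < r) {d : ℝ} (hd : -r < d) :
    exp (-log (1 + d / r) * (r + d)) * mgf (fun n : ℕ => (n : ℝ)) Po(r) (log (1 + d / r))
      ≤ exp (-(3 * d ^ 2 / (2 * (3 * r + d)))) := by
  have hr' : (0 : ℝ) < r := hr
  have hx : -1 < d / r := by rwa [lt_div_iff₀ hr', neg_one_mul]
  rw [mgf_poissonMeasure, exp_log (by linarith), ← exp_add, exp_le_exp]
  have key := mul_le_mul_of_nonneg_left (three_mul_sq_div_le_one_add_mul_log_one_add_sub hx) hr'.le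
  have h3 : (0 : ℝ) < 3 * r + d := by linarith
  have e1 : (r : ℝ) * (3 * (d / r) ^ 2 / (2 * (3 + d / r))) = 3 * d ^ 2 / (2 * (3 * r + d)) := by
    field_simp
  have e2 : (r : ℝ) * ((1 + d / r) * log (1 + d / r) - d / r)
      = log (1 + d / r) * (r + d) - r * (1 + d / r - 1) := by
    field_simp
    ring
  linarith

lemma poissonMeasure_real_upper_tail_le (hr : 0 < r) {t : ℝ} (ht : 0 ≤ t) :
    Po(r).real {n | (r : ℝ) + t ≤ n} ≤ exp (-(3 * t ^ 2 / (2 * (3 * r + t)))) := by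
  have hθ : 0 ≤ log (1 + t / r) := log_nonneg (by simp only [le_add_iff_nonneg_right]; positivity)
  exact (measure_ge_le_exp_mul_mgf _ hθ (integrable_exp_mul_poissonMeasure r _)).trans
    (exp_mul_mgf_poissonMeasure_le hr (by linarith [r.2]))

lemma poissonMeasure_real_lower_tail_le (hr : 0 < r) {t : ℝ} (ht : 0 ≤ t) (htr : t < r) :
    Po(r).real {n | (n : ℝ) ≤ r - t} ≤ exp (-(3 * t ^ 2 / (2 * (3 * r - t)))) := by
  have h₁ : t / r < 1 := (div_lt_one (by exact_mod_cast hr)).2 htr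
  have h₀ : 0 ≤ t / r := by positivity
  have hθ : log (1 + -t / r) ≤ 0 :=
    log_nonpos (by rw [neg_div]; linarith) (by rw [neg_div]; linarith)
  have := (measure_le_le_exp_mul_mgf _ hθ (integrable_exp_mul_poissonMeasure r _)).trans
    (exp_mul_mgf_poissonMeasure_le hr (d := -t) (by linarith))
  simpa [neg_sq, ← sub_eq_add_neg] using this

lemma poissonMeasure_real_lower_tail_le_of_le {t : ℝ} (htr : r ≤ t) :
    Po(r).real {n | (n : ℝ) ≤ r - t} ≤ exp (-t) := by
  rcases htr.lt_or_eq with htr | rfl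
  · have : {n : ℕ | (n : ℝ) ≤ r - t} = ∅ :=
      eq_empty_of_forall_notMem fun n (hn : (n : ℝ) ≤ r - t) => by
        linarith [n.cast_nonneg' (α := ℝ)]
    rw [this, measureReal_empty]
    positivity
  · have : {n : ℕ | (n : ℝ) ≤ r - r} ⊆ {0} := fun n (hn : (n : ℝ) ≤ r - r) => by
      simpa using hn
    refine (measureReal_mono this).trans_eq ?_
    simp [poissonMeasure_real_singleton]

lemma poissonMeasure_real_tails_le_of_le_five_mul (hr : 0 < r) {L : ℝ} (hL : 0 < L)
    (h : (r : ℝ) ≤ 5 * L) :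
    Po(r).real {n | (r : ℝ) + 5 * L ≤ n} + Po(r).real {n | (n : ℝ) ≤ r - 5 * L}
      ≤ exp (-(15 / 8 * L)) + exp (-(45 / 16 * L)) := by
  gcongr
  · refine (poissonMeasure_real_upper_tail_le hr (by positivity)).trans
      (exp_le_exp.2 (neg_le_neg ?_))
    rw [le_div_iff₀ (by positivity)]
    nlinarith
  · exact (poissonMeasure_real_lower_tail_le_of_le h).trans (exp_le_exp.2 (by linarith))

lemma poissonMeasure_real_tails_le_of_sq_eq {L t : ℝ} (hL : 0 < L) (ht : 0 ≤ t)
    (htL : t ^ 2 = 5 * L * r) (h : 5 * L < r) :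
    Po(r).real {n | (r : ℝ) + t ≤ n} + Po(r).real {n | (n : ℝ) ≤ r - t}
      ≤ max (exp (-(15 / 8 * L)) + exp (-(45 / 16 * L))) (2 * exp (-(9 / 4 * L))) := by
  have hr : (0 : ℝ) < r := by linarith
  have htr : t < r := by nlinarith
  have hup := poissonMeasure_real_upper_tail_le (r := r) hr ht
  have hlo := poissonMeasure_real_lower_tail_le (r := r) hr ht htr
  rcases le_or_gt (r : ℝ) (45 * L) with h45 | h45
  · have ht3 : r ≤ 3 * t := by nlinarith
    refine le_max_of_le_left (add_le_add (hup.trans (exp_le_exp.2 (neg_le_neg ?_)))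
      (hlo.trans (exp_le_exp.2 (neg_le_neg ?_))))
    · rw [le_div_iff₀ (by positivity), htL]
      nlinarith
    · rw [le_div_iff₀ (by linarith), htL]
      nlinarith
  · have ht3 : 3 * t ≤ r := by nlinarith
    refine le_max_of_le_right ?_
    rw [two_mul]
    refine add_le_add (hup.trans (exp_le_exp.2 (neg_le_neg ?_)))
      (hlo.trans (exp_le_exp.2 (neg_le_neg ?_)))
    · rw [le_div_iff₀ (by positivity), htL]
      nlinarith
    · rw [le_div_iff₀ (by linarith), htL]
      nlinarith

theorem poissonMeasure_real_abs_sub_ge_le (hr : 0 < r) {L : ℝ} (hL : log 2 ≤ L) :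
    Po(r).real {n | max (√(5 * L * r)) (5 * L) ≤ |(n : ℝ) - r|} ≤ exp (-(5 / 4 * L)) := by
  have hL0 : 0 < L := (log_pos one_lt_two).trans_le hL
  set t := max (√(5 * L * r)) (5 * L)
  have hsplit : {n : ℕ | t ≤ |(n : ℝ) - r|} ⊆ {n | (r : ℝ) + t ≤ n} ∪ {n | (n : ℝ) ≤ r - t} := by
    intro n (hn : t ≤ |(n : ℝ) - r|)
    rcases le_abs'.1 hn with h | h
    · exact Or.inr (show (n : ℝ) ≤ r - t by linarith)
    · exact Or.inl (show (r : ℝ) + t ≤ n by linarith)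
  calc Po(r).real {n | t ≤ |(n : ℝ) - r|}
      ≤ Po(r).real {n | (r : ℝ) + t ≤ n} + Po(r).real {n | (n : ℝ) ≤ r - t} :=
        (measureReal_mono hsplit).trans (measureReal_union_le _ _)
    _ ≤ max (exp (-(15 / 8 * L)) + exp (-(45 / 16 * L))) (2 * exp (-(9 / 4 * L))) := by
        rcases le_or_gt (r : ℝ) (5 * L) with h | h
        · have ht : t = 5 * L := max_eq_right <| sqrt_le_iff.2 ⟨by positivity, by nlinarith⟩
          rw [ht]
          exact (poissonMeasure_real_tails_le_of_le_five_mul hr hL0 h).trans (le_max_left _ _)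
        · have ht : t = √(5 * L * r) :=
            max_eq_left <| (le_sqrt (by positivity) (by positivity)).2 (by nlinarith)
          rw [ht]
          exact poissonMeasure_real_tails_le_of_sq_eq hL0 (sqrt_nonneg _)
            (sq_sqrt (by positivity)) h
    _ ≤ exp (-(5 / 4 * L)) := max_le (exp_neg_add_exp_neg_le hL) (two_mul_exp_neg_le hL)

end ProbabilityTheory

theorem stmt8 (P : Measure Ω) [IsProbabilityMeasure P] (lam : ℝ) (hlam : 0 < lam)
    (n : ℕ) (hn : 2 ≤ n) (X : Ω → ℕ)
    (hdist : ∀ k : ℕ, P {ω | X ω = k}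
      = ENNReal.ofReal (Real.exp (-lam) * lam ^ k / (Nat.factorial k : ℝ))) :
    P {ω | max (Real.sqrt (5 * Real.log n * lam)) (5 * Real.log n) ≤ |(X ω : ℝ) - lam|}
      ≤ ENNReal.ofReal ((n : ℝ) ^ (-(5 : ℝ)/4)) := by
  set r : ℝ≥0 := ⟨lam, hlam.le⟩
  have hlaw : ∀ k : ℕ, P (X ⁻¹' {k}) ≤ Po(r) {k} := fun k => by
    rw [poissonMeasure_singleton]; exact (hdist k).le
  have hL : log 2 ≤ log n := log_le_log two_pos (by exact_mod_cast hn)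
  calc P {ω | max (√(5 * log n * lam)) (5 * log n) ≤ |(X ω : ℝ) - lam|}
      ≤ Po(r) {k | max (√(5 * log n * r)) (5 * log n) ≤ |(k : ℝ) - r|} :=
        measure_preimage_le_of_forall_singleton hlaw _
    _ = ENNReal.ofReal (Po(r).real {k | max (√(5 * log n * r)) (5 * log n) ≤ |(k : ℝ) - r|}) :=
        (ofReal_measureReal (measure_ne_top _ _)).symm
    _ ≤ ENNReal.ofReal (exp (-(5 / 4 * log n))) :=
        ENNReal.ofReal_le_ofReal (poissonMeasure_real_abs_sub_ge_le hlam hL)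
    _ = ENNReal.ofReal ((n : ℝ) ^ (-(5 : ℝ)/4)) := by
        rw [rpow_def_of_pos (by positivity)]; ring_nf

end
end

section
/- Assume condition (RV) with α > 2 and assume the Chung–Lu degree hypothesis. Then P( for all i ∈ {1,…,n}, D_i(n) < W_{(i)}(n) + max(√(4·log(n)·W_{(i)}(n)), 4·log(n)) ) → 1 as n → ∞. -/
/-!
Conditionally on the weights, `D n i` is a sum of independent Bernoulli variables whose success
probabilities `min (Wᵢ Wⱼ / L) 1` add up to at most `Wᵢ`. The Chernoff bound
`P(X ≥ a) ≤ exp (-t a + (eᵗ - 1) E X)`, with `t = 1` when `Wᵢ ≤ 4 log n` and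
`t = 9 √(4 Wᵢ log n) / (22 Wᵢ)` otherwise, bounds the probability that `D n i` exceeds
`Wᵢ + max √(4 Wᵢ log n) (4 log n)` by `n ^ (-11/10)`. A union bound over the `n` vertices leaves
`n ^ (-1/10) → 0`.
-/

open MeasureTheory ProbabilityTheory Filter Real

noncomputable section

variable {Ω : Type*} [mΩ : MeasurableSpace Ω]

open scoped ENNReal

section Chernoff

variable {μ : Measure Ω} [IsProbabilityMeasure μ] {ι : Type*}

lemma mgf_indicator_one_le {s : Set Ω} (hs : MeasurableSet s) (t : ℝ) :
    mgf (s.indicator 1) μ t ≤ exp ((exp t - 1) * μ.real s) := by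
  have hexp : (fun ω => exp (t * s.indicator 1 ω))
      = fun ω => 1 + (exp t - 1) * s.indicator 1 ω := by
    ext ω
    by_cases h : ω ∈ s <;> simp [h]
  rw [mgf, hexp, integral_add (integrable_const 1) ((integrable_indicator_iff hs).2
    (integrable_const 1).integrableOn |>.const_mul _), integral_const_mul,
    integral_indicator_one hs]
  simpa [add_comm] using add_one_le_exp ((exp t - 1) * μ.real s)

lemma measureReal_sum_indicator_ge_le {s : ι → Set Ω} (hs : ∀ i, MeasurableSet (s i))
    (hind : iIndepSet s μ) (J : Finset ι) (a : ℝ) {t : ℝ} (ht : 0 ≤ t) :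
    μ.real {ω | a ≤ ∑ j ∈ J, (s j).indicator 1 ω}
      ≤ exp (-t * a + (exp t - 1) * ∑ j ∈ J, μ.real (s j)) := by
  have hmeas : ∀ j, Measurable ((s j).indicator (1 : Ω → ℝ)) :=
    fun j => measurable_const.indicator (hs j)
  have hint : Integrable (fun ω => exp (t * ∑ j ∈ J, (s j).indicator 1 ω)) μ := by
    refine .of_bound (by fun_prop) (exp (t * J.card)) (ae_of_all _ fun ω => ?_)
    rw [norm_of_nonneg (exp_pos _).le, exp_le_exp]
    refine mul_le_mul_of_nonneg_left ?_ ht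
    exact (Finset.sum_le_card_nsmul _ _ 1 fun j _ => Set.indicator_le_self' (by simp) ω).trans
      (by simp)
  have hmgf : mgf (fun ω => ∑ j ∈ J, (s j).indicator 1 ω) μ t
      ≤ ∏ j ∈ J, exp ((exp t - 1) * μ.real (s j)) := by
    have hsum := (hind.iIndepFun_indicator (β := ℝ)).mgf_sum hmeas J (t := t)
    simp only [← Pi.one_def] at hsum
    rw [← Finset.sum_fn, hsum]
    exact Finset.prod_le_prod (fun j _ => mgf_nonneg) fun j _ => mgf_indicator_one_le (hs j) t
  calc μ.real {ω | a ≤ ∑ j ∈ J, (s j).indicator 1 ω}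
      ≤ exp (-t * a) * mgf (fun ω => ∑ j ∈ J, (s j).indicator 1 ω) μ t :=
        measure_ge_le_exp_mul_mgf a ht hint
    _ ≤ exp (-t * a) * ∏ j ∈ J, exp ((exp t - 1) * μ.real (s j)) := by gcongr
    _ = exp (-t * a + (exp t - 1) * ∑ j ∈ J, μ.real (s j)) := by
        rw [← exp_sum, ← exp_add, Finset.mul_sum]

end Chernoff

def degreeBound (ℓ w : ℝ) : ℝ := w + max (√(4 * ℓ * w)) (4 * ℓ)

lemma exp_sub_one_le_of_le_half {t : ℝ} (h0 : 0 ≤ t) (h1 : t ≤ 1 / 2) :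
    exp t - 1 ≤ t + 11 / 18 * t ^ 2 := by
  have h := Real.exp_bound' h0 (by linarith) (n := 3) (by norm_num)
  simp only [Finset.sum_range_succ, Finset.sum_range_zero, Nat.factorial] at h
  norm_num at h
  nlinarith [mul_le_mul_of_nonneg_left h1 (sq_nonneg t)]

lemma exists_exponent_degreeBound_le {ℓ w m : ℝ} (hℓ : 0 ≤ ℓ) (hm : 0 ≤ m) (hmw : m ≤ w) :
    ∃ t, 0 ≤ t ∧ -t * degreeBound ℓ w + (exp t - 1) * m ≤ -(11 / 10) * ℓ := by
  have he := Real.exp_one_lt_d9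
  have he' := Real.exp_one_gt_d9
  rcases le_or_gt w (4 * ℓ) with hw | hw
  · refine ⟨1, zero_le_one, ?_⟩
    have : 4 * ℓ ≤ max (√(4 * ℓ * w)) (4 * ℓ) := le_max_right _ _
    have : (exp 1 - 1) * m ≤ (exp 1 - 1) * w := by gcongr; linarith
    have : (exp 1 - 2) * w ≤ (exp 1 - 2) * (4 * ℓ) := by gcongr; linarith
    have : exp 1 * ℓ ≤ 2.72 * ℓ := by gcongr; linarith
    simp only [degreeBound]
    linarith
  · set r := √(4 * ℓ * w)
    have hwpos : 0 < w := by linarith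
    have hr2 : r ^ 2 = 4 * ℓ * w := Real.sq_sqrt (by positivity)
    have hr0 : 0 ≤ r := Real.sqrt_nonneg _
    have hrw : r ≤ w := by nlinarith
    have hℓr : 4 * ℓ ≤ r := by nlinarith
    -- `t` minimises `-t * r + 11 / 18 * t ^ 2 * w`, the bound left by `exp_sub_one_le_of_le_half`
    set t := 9 * r / (22 * w)
    have ht0 : 0 ≤ t := by positivity
    have ht1 : t ≤ 1 / 2 := by rw [div_le_iff₀ (by positivity)]; linarith
    have htr : t * r = 18 / 11 * ℓ := by simp only [t]; field_simp; linarith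
    have htw : t ^ 2 * w = 81 / 121 * ℓ := by simp only [t]; field_simp; linarith
    refine ⟨t, ht0, ?_⟩
    have hbound : degreeBound ℓ w = w + r := by simp only [degreeBound]; rw [max_eq_left hℓr]
    have : (exp t - 1) * m ≤ (t + 11 / 18 * t ^ 2) * w :=
      mul_le_mul (exp_sub_one_le_of_le_half ht0 ht1) hmw hm (by positivity)
    rw [hbound]
    nlinarith

lemma measureReal_sum_indicator_ge_degreeBound_le {μ : Measure Ω} [IsProbabilityMeasure μ]
    {ι : Type*} {s : ι → Set Ω} (hs : ∀ i, MeasurableSet (s i)) (hind : iIndepSet s μ)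
    (J : Finset ι) {ℓ w : ℝ} (hℓ : 0 ≤ ℓ) (hw : ∑ j ∈ J, μ.real (s j) ≤ w) :
    μ.real {ω | degreeBound ℓ w ≤ ∑ j ∈ J, (s j).indicator 1 ω} ≤ exp (-(11 / 10) * ℓ) := by
  obtain ⟨t, ht, hexp⟩ :=
    exists_exponent_degreeBound_le hℓ (Finset.sum_nonneg fun j _ => measureReal_nonneg) hw
  exact (measureReal_sum_indicator_ge_le hs hind J _ ht).trans (exp_le_exp.2 hexp)

lemma ProbabilityTheory.Kernel.iIndepSet.ae_iIndepSet {α ι : Type*} {mα : MeasurableSpace α}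
    [Countable ι] {κ : Kernel α Ω} {μ : Measure α} {s : ι → Set Ω}
    (hs : ∀ i, MeasurableSet (s i)) (h : Kernel.iIndepSet s κ μ) :
    ∀ᵐ a ∂μ, ProbabilityTheory.iIndepSet s (κ a) := by
  filter_upwards [ae_all_iff.2 ((Kernel.iIndepSet_iff_meas_biInter hs).1 h)] with a ha
  exact (ProbabilityTheory.iIndepSet_iff_meas_biInter hs).2 ha

section CondExpKernel

variable {Ω' : Type*} {m : MeasurableSpace Ω'} [mΩ' : MeasurableSpace Ω'] [StandardBorelSpace Ω']
  {μ : Measure Ω'} [IsFiniteMeasure μ]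

lemma ae_ae_condExpKernel_mem_iff (hm : m ≤ mΩ') {s : Set Ω'} (hs : MeasurableSet[m] s) :
    ∀ᵐ ω ∂μ, ∀ᵐ ω' ∂condExpKernel μ m ω, ω' ∈ s ↔ ω ∈ s := by
  have h : (fun ω => (condExpKernel μ m ω).real s) =ᵐ[μ] s.indicator 1 := by
    refine (condExpKernel_ae_eq_condExp hm (hm s hs)).trans ?_
    rw [condExp_of_stronglyMeasurable hm (stronglyMeasurable_const.indicator hs)
      ((integrable_const 1).indicator (hm s hs))]
    exact .rfl
  filter_upwards [h] with ω hω
  by_cases hωs : ω ∈ s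
  · rw [Set.indicator_of_mem hωs, Pi.one_apply, measureReal_def, ENNReal.toReal_eq_one_iff,
      ← measure_univ (μ := condExpKernel μ m ω)] at hω
    filter_upwards [(ae_mem_iff_measure_eq (hm s hs).nullMeasurableSet).2 hω] with ω' hω'
    simp [hω', hωs]
  · rw [Set.indicator_of_notMem hωs, measureReal_eq_zero_iff] at hω
    filter_upwards [measure_eq_zero_iff_ae_notMem.1 hω] with ω' hω'
    simp [hω', hωs]

lemma ae_ae_condExpKernel_eq (hm : m ≤ mΩ') {g : Ω' → ℝ} (hg : Measurable[m] g) :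
    ∀ᵐ ω ∂μ, ∀ᵐ ω' ∂condExpKernel μ m ω, g ω' = g ω := by
  have hq := ae_all_iff.2 fun q : ℚ =>
    ae_ae_condExpKernel_mem_iff (μ := μ) hm (hg (measurableSet_Ioi (a := (q : ℝ))))
  filter_upwards [hq] with ω hω
  filter_upwards [ae_all_iff.2 hω] with ω' hω'
  simp only [Set.mem_preimage, Set.mem_Ioi] at hω'
  exact le_antisymm (le_of_forall_rat_lt_imp_le fun q hq => ((hω' q).1 hq).le)
    (le_of_forall_rat_lt_imp_le fun q hq => ((hω' q).2 hq).le)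

lemma measure_le_of_ae_condExpKernel_le (hm : m ≤ mΩ') {s : Set Ω'} (hs : MeasurableSet s)
    {c : ℝ≥0∞} (h : ∀ᵐ ω ∂μ, condExpKernel μ m ω s ≤ c) : μ s ≤ c * μ Set.univ := by
  calc μ s = (condExpKernel μ m ∘ₘ μ.trim hm) s := by rw [condExpKernel_comp_trim]
    _ = ∫⁻ ω, condExpKernel μ m ω s ∂μ := by
        rw [Measure.bind_apply hs (Kernel.aemeasurable _),
          lintegral_trim hm (Kernel.measurable_coe _ hs)]
    _ ≤ ∫⁻ _, c ∂μ := lintegral_mono_ae h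
    _ = c * μ Set.univ := lintegral_const c

end CondExpKernel

lemma sum_min_mul_div_sum_le {ι : Type*} {J : Finset ι} {a : ℝ} {b : ι → ℝ} (ha : 0 ≤ a)
    (hb : ∀ j ∈ J, 0 ≤ b j) : ∑ j ∈ J, min (a * b j / ∑ l ∈ J, b l) 1 ≤ a := by
  calc ∑ j ∈ J, min (a * b j / ∑ l ∈ J, b l) 1
      ≤ ∑ j ∈ J, a * b j / ∑ l ∈ J, b l := Finset.sum_le_sum fun j _ => min_le_left _ _
    _ = a * (∑ l ∈ J, b l) / ∑ l ∈ J, b l := by rw [← Finset.sum_div, Finset.mul_sum]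
    _ ≤ a := by
        rcases (Finset.sum_nonneg hb).eq_or_lt with h | h
        · simp [← h, ha]
        · rw [mul_div_cancel_right₀ _ h.ne']

section ChungLu

variable {P : Measure Ω} {F : ℝ → ℝ} {W : ℕ → Ω → ℝ}
  {Wo : ℕ → ℕ → Ω → ℝ} {A : ℕ → ℕ → ℕ → Ω → ℕ} {D : ℕ → ℕ → Ω → ℕ} {n i j : ℕ}

lemma IIDWith.ae_nonneg (hF : IsCDF F) (hW : IIDWith P F W) : ∀ᵐ ω ∂P, ∀ l, 0 ≤ W l ω := by
  refine ae_all_iff.2 fun l => ae_iff.2 ?_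
  have h0 : P {ω | W l ω ≤ 0} = 0 := by rw [hW.2.2 l 0, hF.2.2.1 0 le_rfl, ENNReal.ofReal_zero]
  exact measure_mono_null (fun ω hω => (not_le.1 hω).le) h0

lemma IsOrderStats.exists_eq (hWo : IsOrderStats W Wo) (hj : j ∈ Finset.Icc 1 n) (ω : Ω) :
    ∃ l ∈ Finset.Icc 1 n, W l ω = Wo n j ω := by
  have h := Multiset.mem_map_of_mem (fun k => Wo n k ω) (Finset.mem_def.1 hj)
  rw [hWo.2.2 n ω] at h
  simpa using h

lemma IsOrderStats.sum_eq (hWo : IsOrderStats W Wo) (n : ℕ) (ω : Ω) :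
    ∑ j ∈ Finset.Icc 1 n, Wo n j ω = ∑ l ∈ Finset.Icc 1 n, W l ω := by
  rw [Finset.sum, Finset.sum, hWo.2.2 n ω]

lemma IsOrderStats.weightSigma_le (hWo : IsOrderStats W Wo) (n : ℕ) : weightSigma Wo n ≤ mΩ :=
  (measurable_pi_lambda _ fun _ => hWo.1 n _).comap_le

variable [IsFiniteMeasure P] [StandardBorelSpace Ω]

lemma ChungLu.measurable_degree (hCL : ChungLu P W Wo A D) (n i : ℕ) : Measurable (D n i) := by
  simp_rw [funext (hCL.2.2.2.1 n i)]
  exact Finset.measurable_sum _ fun j _ => hCL.1 n i j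

lemma ChungLu.degree_eq_sum_indicator (hCL : ChungLu P W Wo A D) (n i : ℕ) (ω : Ω) :
    (D n i ω : ℝ) = ∑ j : Finset.Icc 1 n, {ω | A n i j ω = 1}.indicator 1 ω := by
  rw [hCL.2.2.2.1 n i ω, Nat.cast_sum, Finset.sum_coe_sort (Finset.Icc 1 n)
    (fun j => {ω | A n i j ω = 1}.indicator (1 : Ω → ℝ) ω)]
  refine Finset.sum_congr rfl fun j _ => ?_
  rcases Nat.le_one_iff_eq_zero_or_eq_one.1 (hCL.2.1 n i j ω) with h | h <;> simp [h]

lemma ChungLu.ae_condExpKernel_edge (hCL : ChungLu P W Wo A D) (hle : weightSigma Wo n ≤ mΩ)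
    (hi : i ∈ Finset.Icc 1 n) (hj : j ∈ Finset.Icc 1 n) :
    ∀ᵐ ω ∂P, (condExpKernel P (weightSigma Wo n) ω).real {ω' | A n i j ω' = 1}
      = min (Wo n i ω * Wo n j ω / ∑ l ∈ Finset.Icc 1 n, W l ω) 1 := by
  rcases le_total i j with hij | hji
  · exact (condExpKernel_ae_eq_condExp hle (hCL.1 n i j (measurableSet_singleton 1))).trans
      (hCL.2.2.2.2.2 n i hi j hj hij)
  · have h := (condExpKernel_ae_eq_condExp hle (hCL.1 n j i (measurableSet_singleton 1))).trans
      (hCL.2.2.2.2.2 n j hj i hi hji)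
    filter_upwards [h] with ω hω
    rw [mul_comm (Wo n i ω), ← hω]
    congr 1 with ω'
    simp [hCL.2.2.1 n j i]

lemma ChungLu.ae_sum_condExpKernel_edge_le (hF : IsCDF F) (hW : IIDWith P F W)
    (hWo : IsOrderStats W Wo) (hCL : ChungLu P W Wo A D) (hle : weightSigma Wo n ≤ mΩ)
    (hi : i ∈ Finset.Icc 1 n) :
    ∀ᵐ ω ∂P, ∑ j : Finset.Icc 1 n,
      (condExpKernel P (weightSigma Wo n) ω).real {ω' | A n i j ω' = 1} ≤ Wo n i ω := by
  have hedges := (Finset.eventually_all _).2 fun j hj => hCL.ae_condExpKernel_edge hle hi hj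
  filter_upwards [hW.ae_nonneg hF, hedges] with ω hW0 hp
  have hWo0 : ∀ j ∈ Finset.Icc 1 n, 0 ≤ Wo n j ω := fun j hj => by
    obtain ⟨l, -, hl⟩ := hWo.exists_eq hj ω
    exact hl ▸ hW0 l
  rw [Finset.sum_coe_sort (Finset.Icc 1 n)
    (fun j => (condExpKernel P (weightSigma Wo n) ω).real {ω' | A n i j ω' = 1}),
    Finset.sum_congr rfl hp, ← hWo.sum_eq]
  exact sum_min_mul_div_sum_le (hWo0 i hi) hWo0

lemma ChungLu.ae_iIndepSet_row (hCL : ChungLu P W Wo A D) (hle : weightSigma Wo n ≤ mΩ)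
    (hi : i ∈ Finset.Icc 1 n) :
    ∀ᵐ ω ∂P, iIndepSet (fun j : Finset.Icc 1 n => {ω' | A n i j ω' = 1})
      (condExpKernel P (weightSigma Wo n) ω) := by
  let edge : Finset.Icc 1 n →
      {p : ℕ × ℕ // p.1 ∈ Finset.Icc 1 n ∧ p.2 ∈ Finset.Icc 1 n ∧ p.1 ≤ p.2} :=
    fun j => ⟨(min i j, max i j), by
      have := Finset.mem_Icc.1 j.2
      simp only [Finset.mem_Icc] at hi ⊢
      omega⟩
  have hedge : Function.Injective edge := by
    intro j j' h
    simp only [edge, Subtype.mk.injEq, Prod.mk.injEq] at h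
    exact Subtype.ext (by omega)
  have hrow : ∀ (j : Finset.Icc 1 n) ω, A n (edge j).1.1 (edge j).1.2 ω = A n i j ω := by
    intro j ω
    rcases le_total i j with h | h
    · simp [edge, h]
    · simp [edge, h, hCL.2.2.1 n i j]
  have hmeas : ∀ j : Finset.Icc 1 n, MeasurableSet {ω' | A n i j ω' = 1} :=
    fun j => hCL.1 n i j (measurableSet_singleton 1)
  have hind : Kernel.iIndepSet (fun j : Finset.Icc 1 n => {ω' | A n i j ω' = 1})
      (condExpKernel P (weightSigma Wo n)) (P.trim hle) := by
    have hfun : Kernel.iIndepFun (fun j ω => A n (edge j).1.1 (edge j).1.2 ω)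
        (condExpKernel P (weightSigma Wo n)) (P.trim hle) :=
      (hCL.2.2.2.2.1 n hle).precomp hedge
    refine Kernel.iIndepSets.iIndepSet_of_mem (fun j => ?_) hmeas (Kernel.iIndep.iIndepSets' hfun)
    exact ⟨{1}, measurableSet_singleton 1, by ext ω; simp [hrow]⟩
  exact ae_of_ae_trim hle (hind.ae_iIndepSet hmeas)

end ChungLu

lemma ChungLu.measure_degree_ge_degreeBound_le {P : Measure Ω} [IsProbabilityMeasure P]
    [StandardBorelSpace Ω] {F : ℝ → ℝ} {W : ℕ → Ω → ℝ} {Wo : ℕ → ℕ → Ω → ℝ}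
    {A : ℕ → ℕ → ℕ → Ω → ℕ} {D : ℕ → ℕ → Ω → ℕ} {n i : ℕ} (hF : IsCDF F)
    (hW : IIDWith P F W) (hWo : IsOrderStats W Wo) (hCL : ChungLu P W Wo A D)
    (hi : i ∈ Finset.Icc 1 n) :
    P {ω | degreeBound (log n) (Wo n i ω) ≤ D n i ω}
      ≤ ENNReal.ofReal (exp (-(11 / 10) * log n)) := by
  set κ := condExpKernel P (weightSigma Wo n)
  have hle := hWo.weightSigma_le n
  have hWo_meas : Measurable[weightSigma Wo n] (Wo n i) := by
    obtain ⟨hi1, hin⟩ := Finset.mem_Icc.1 hi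
    have h := (measurable_pi_apply (⟨i - 1, by omega⟩ : Fin n)).comp
      (comap_measurable (fun ω (k : Fin n) => Wo n ((k : ℕ) + 1) ω))
    simp only [Function.comp_def, Nat.sub_add_cancel hi1] at h
    exact h
  have hmeas : MeasurableSet {ω | degreeBound (log n) (Wo n i ω) ≤ D n i ω} := by
    refine measurableSet_le ?_ (measurable_from_top.comp (hCL.measurable_degree n i))
    have := hWo.1 n i
    unfold degreeBound
    fun_prop
  refine (measure_le_of_ae_condExpKernel_le hle hmeas ?_).trans_eq (by rw [measure_univ, mul_one])
  filter_upwards [hCL.ae_sum_condExpKernel_edge_le hF hW hWo hle hi,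
    hCL.ae_iIndepSet_row hle hi, ae_ae_condExpKernel_eq hle hWo_meas] with ω hsum hind hconst
  calc κ ω {ω' | degreeBound (log n) (Wo n i ω') ≤ D n i ω'}
      ≤ κ ω {ω' | degreeBound (log n) (Wo n i ω)
          ≤ ∑ j : Finset.Icc 1 n, {ω | A n i j ω = 1}.indicator 1 ω'} := by
        refine measure_mono_ae ?_
        filter_upwards [hconst] with ω' h' (hω' : degreeBound (log n) (Wo n i ω') ≤ D n i ω')
        show degreeBound (log n) (Wo n i ω) ≤ _
        rwa [← h', ← hCL.degree_eq_sum_indicator]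
    _ ≤ ENNReal.ofReal (exp (-(11 / 10) * log n)) := by
        rw [← ENNReal.ofReal_toReal (measure_ne_top _ _)]
        exact ENNReal.ofReal_le_ofReal (measureReal_sum_indicator_ge_degreeBound_le
          (s := fun j : Finset.Icc 1 n => {ω' | A n i j ω' = 1})
          (fun j => hCL.1 n i j (measurableSet_singleton 1)) hind _ (log_natCast_nonneg n) hsum)

lemma tendsto_measure_setOf_forall_Icc_of_le {μ : Measure Ω} [IsProbabilityMeasure μ]
    {p : ℕ → ℕ → Ω → Prop} {b : ℕ → ℝ} (hb : Tendsto (fun n : ℕ => n * b n) atTop (nhds 0))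
    (h : ∀ n, ∀ i ∈ Finset.Icc 1 n, μ {ω | ¬p n i ω} ≤ ENNReal.ofReal (b n)) :
    Tendsto (fun n => μ {ω | ∀ i ∈ Finset.Icc 1 n, p n i ω}) atTop (nhds 1) := by
  set s := fun n => {ω | ∀ i ∈ Finset.Icc 1 n, p n i ω}
  have hcompl : ∀ n, μ (s n)ᶜ ≤ ENNReal.ofReal (n * b n) := by
    intro n
    calc μ (s n)ᶜ = μ (⋃ i ∈ Finset.Icc 1 n, {ω | ¬p n i ω}) := by
          congr 1 with ω
          simp [s, and_assoc]
      _ ≤ ∑ i ∈ Finset.Icc 1 n, μ {ω | ¬p n i ω} := measure_biUnion_finset_le _ _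
      _ ≤ ∑ i ∈ Finset.Icc 1 n, ENNReal.ofReal (b n) := Finset.sum_le_sum (h n)
      _ = ENNReal.ofReal (n * b n) := by
          rw [Finset.sum_const, Nat.card_Icc, nsmul_eq_mul, ENNReal.ofReal_mul (Nat.cast_nonneg _),
            ENNReal.ofReal_natCast, Nat.add_sub_cancel]
  have hcompl0 : Tendsto (fun n => μ (s n)ᶜ) atTop (nhds 0) := by
    refine tendsto_of_tendsto_of_tendsto_of_le_of_le tendsto_const_nhds ?_ (fun _ => zero_le)
      hcompl
    simpa using ENNReal.tendsto_ofReal hb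
  refine tendsto_of_tendsto_of_tendsto_of_le_of_le (g := fun n => 1 - μ (s n)ᶜ) ?_
    tendsto_const_nhds (fun n => ?_) (fun _ => prob_le_one)
  · simpa using ENNReal.Tendsto.sub tendsto_const_nhds hcompl0 (.inl ENNReal.one_ne_top)
  · rw [tsub_le_iff_right, ← measure_univ (μ := μ), ← Set.union_compl_self]
    exact measure_union_le _ _

lemma tendsto_natCast_mul_exp_neg_mul_log {c : ℝ} (hc : 1 < c) :
    Tendsto (fun n : ℕ => (n : ℝ) * exp (-c * log n)) atTop (nhds 0) := by
  have h := (tendsto_rpow_neg_atTop (by linarith : 0 < c - 1)).comp tendsto_natCast_atTop_atTop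
  refine h.congr' ((eventually_gt_atTop 0).mono fun n hn => ?_)
  have hn' : (0 : ℝ) < n := Nat.cast_pos.2 hn
  calc (n : ℝ) ^ (-(c - 1)) = exp (log n) * exp (-c * log n) := by
        rw [rpow_def_of_pos hn', ← exp_add]
        ring_nf
    _ = n * exp (-c * log n) := by rw [exp_log hn']

theorem stmt12_general [StandardBorelSpace Ω]
    (F : ℝ → ℝ) (hF : IsCDF F)
    (P : Measure Ω) [IsProbabilityMeasure P] (W : ℕ → Ω → ℝ) (Wo : ℕ → ℕ → Ω → ℝ)
    (hW : IIDWith P F W) (hWo : IsOrderStats W Wo)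
    (A : ℕ → ℕ → ℕ → Ω → ℕ) (D : ℕ → ℕ → Ω → ℕ) (hCL : ChungLu P W Wo A D) :
    Tendsto (fun n : ℕ => P {ω | ∀ i ∈ Finset.Icc 1 n,
        (D n i ω : ℝ) < Wo n i ω
          + max (Real.sqrt (4 * Real.log n * Wo n i ω)) (4 * Real.log n)})
      atTop (nhds 1) := by
  refine tendsto_measure_setOf_forall_Icc_of_le
    (tendsto_natCast_mul_exp_neg_mul_log (by norm_num : (1 : ℝ) < 11 / 10)) fun n i hi => ?_
  simpa only [not_lt, degreeBound] using hCL.measure_degree_ge_degreeBound_le hF hW hWo hi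

theorem stmt12 [StandardBorelSpace Ω]
    (F : ℝ → ℝ) (hF : IsCDF F) (α : ℝ) (hα : 2 < α) (hRV : CondRV F α)
    (P : Measure Ω) [IsProbabilityMeasure P] (W : ℕ → Ω → ℝ) (Wo : ℕ → ℕ → Ω → ℝ)
    (hW : IIDWith P F W) (hWo : IsOrderStats W Wo)
    (A : ℕ → ℕ → ℕ → Ω → ℕ) (D : ℕ → ℕ → Ω → ℕ) (hCL : ChungLu P W Wo A D) :
    Tendsto (fun n : ℕ => P {ω | ∀ i ∈ Finset.Icc 1 n,
        (D n i ω : ℝ) < Wo n i ω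
          + max (Real.sqrt (4 * Real.log n * Wo n i ω)) (4 * Real.log n)})
      atTop (nhds 1) :=
  stmt12_general F hF P W Wo hW hWo A D hCL
end
end
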